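/- arXiv:dg-ga/9607005 — 7 statements merged into one kernel-verified Lean document; each statement's English description precedes it below -/
import Mathlib

section
/- Let U ⊆ ℂ be a connected open set, X a complex Banach space, and f : U → B(X) an analytic (holomorphic) family of bounded linear operators on X such that for every z ∈ U the operator f(z) is Fredholm, i.e. ker f(z) is finite-dimensional and the range of f(z) is closed and of finite codimension in X. If f(z₀) is bijective for some z₀ ∈ U, then the set D = {z ∈ U : f(z) is not bijective} is discrete in U, i.e. D has no accumulation point inside U. -/
/-- A bounded operator is Fredholm if its kernel is finite dimensional and its range is
closed of finite codimension. -/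
def IsFredholm {X : Type*} [NormedAddCommGroup X] [NormedSpace ℂ X]
    (T : X →L[ℂ] X) : Prop :=
  FiniteDimensional ℂ (LinearMap.ker (T : X →ₗ[ℂ] X)) ∧ IsClosed (LinearMap.range (T : X →ₗ[ℂ] X) : Set X) ∧
    FiniteDimensional ℂ (X ⧸ LinearMap.range (T : X →ₗ[ℂ] X))



open Filter Topology

lemma aux_det_ne_zero_iff {V : Type*} [AddCommGroup V] [Module ℂ V] [FiniteDimensional ℂ V]
    (g : V →ₗ[ℂ] V) : LinearMap.det g ≠ 0 ↔ Function.Bijective g := by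
  have h45 := (LinearMap.hasEigenvalue_zero_tfae (g : Module.End ℂ V)).out 3 4
  constructor
  · intro hdet
    have hker : LinearMap.ker g = ⊥ := by
      by_contra hk
      exact hdet (h45.mpr (bot_lt_iff_ne_bot.mpr (Ne.symm (fun h => hk h.symm))))
    have hinj : Function.Injective g := LinearMap.ker_eq_bot.mp hker
    exact ⟨hinj, (LinearMap.injective_iff_surjective).mp hinj⟩
  · intro hbij hdet
    have := h45.mp hdet
    rw [LinearMap.ker_eq_bot.mpr hbij.injective] at this
    exact lt_irrefl _ this

lemma aux_analyticAt_det {V : Type*} [NormedAddCommGroup V] [NormedSpace ℂ V]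
    [FiniteDimensional ℂ V] {t : ℂ → V →L[ℂ] V} {z₁ : ℂ} (ht : AnalyticAt ℂ t z₁) :
    AnalyticAt ℂ (fun z => LinearMap.det ((t z : V →ₗ[ℂ] V))) z₁ := by
  classical
  let b := Module.finBasis ℂ V
  have hdet : ∀ z, LinearMap.det ((t z : V →ₗ[ℂ] V)) =
      Matrix.det (LinearMap.toMatrix b b (t z : V →ₗ[ℂ] V)) := by
    intro z; rw [LinearMap.det_toMatrix]
  simp only [hdet, Matrix.det_apply']
  apply Finset.analyticAt_fun_sum
  intro σ _
  apply AnalyticAt.mul analyticAt_const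
  apply Finset.analyticAt_fun_prod
  intro i _
  have : (fun z => LinearMap.toMatrix b b ((t z : V →ₗ[ℂ] V)) (σ i) i)
      = (fun z => (LinearMap.toContinuousLinearMap (b.coord (σ i)))
          ((ContinuousLinearMap.apply ℂ V (b i)) (t z))) := by
    funext z
    simp [LinearMap.toMatrix_apply, Module.Basis.coord_apply]
  rw [this]
  exact ((LinearMap.toContinuousLinearMap (b.coord (σ i))).analyticAt _).comp
    (((ContinuousLinearMap.apply ℂ V (b i)).analyticAt _).comp ht)

set_option maxHeartbeats 1000000

lemma aux_dichotomy {X : Type*} [NormedAddCommGroup X] [NormedSpace ℂ X] [CompleteSpace X]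
    (f : ℂ → X →L[ℂ] X) (z₁ : ℂ) (hfa : AnalyticAt ℂ f z₁)
    (hker : FiniteDimensional ℂ (LinearMap.ker (f z₁ : X →ₗ[ℂ] X)))
    (hcl : IsClosed ((LinearMap.range (f z₁ : X →ₗ[ℂ] X) : Submodule ℂ X) : Set X))
    (hquot : FiniteDimensional ℂ (X ⧸ LinearMap.range (f z₁ : X →ₗ[ℂ] X))) :
    (∀ᶠ z in 𝓝 z₁, ¬ Function.Bijective (f z)) ∨
      (∀ᶠ z in 𝓝[≠] z₁, Function.Bijective (f z)) := by
  classical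
  set A := f z₁ with hA
  set N := LinearMap.ker (A : X →ₗ[ℂ] X) with hN
  set R := LinearMap.range (A : X →ₗ[ℂ] X) with hR
  obtain ⟨πN, hπN⟩ := Submodule.ClosedComplemented.of_finiteDimensional N
  obtain ⟨πR, hπR⟩ := Submodule.ClosedComplemented.of_quotient_finiteDimensional hcl
  set Q : X →L[ℂ] X := 1 - N.subtypeL.comp πN with hQdef
  set P : X →L[ℂ] X := R.subtypeL.comp πR with hPdef
  have hQx_eq : ∀ x, Q x = x - (πN x : X) := by
    intro x; simp [hQdef]
  have hPx_eq : ∀ x, P x = (πR x : X) := by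
    intro x; simp [hPdef]
  have hπN0 : ∀ x, πN (Q x) = 0 := by
    intro x; rw [hQx_eq, map_sub, hπN (πN x), sub_self]
  have hQQx : ∀ x, Q (Q x) = Q x := by
    intro x; rw [hQx_eq (Q x), hπN0 x]; simp
  have hQn : ∀ n : N, Q (n : X) = 0 := by
    intro n; rw [hQx_eq, hπN n, sub_self]
  have hAQx : ∀ x, A (Q x) = A x := by
    intro x
    rw [hQx_eq, map_sub]
    have h1 : A ((πN x : X)) = 0 := LinearMap.mem_ker.mp (πN x).2
    rw [h1, sub_zero]
  have hPmem : ∀ x, P x ∈ R := fun x => by rw [hPx_eq]; exact (πR x).2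
  have hPr : ∀ y ∈ R, P y = y := by
    intro y hy
    have := hπR ⟨y, hy⟩
    rw [hPx_eq]
    rw [show πR y = πR (↑(⟨y, hy⟩ : R)) from rfl, this]
  have hPPx : ∀ x, P (P x) = P x := fun x => hPr _ (hPmem x)
  have hPAx : ∀ x, P (A x) = A x := fun x => hPr _ ⟨x, rfl⟩
  -- the subspace X₀
  set X₀ : Submodule ℂ X := LinearMap.ker ((N.subtypeL.comp πN : X →L[ℂ] X) : X →ₗ[ℂ] X) with hX₀def
  have hmemX₀ : ∀ x, x ∈ X₀ ↔ (πN x : X) = 0 := by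
    intro x
    rw [hX₀def, LinearMap.mem_ker]
    constructor
    · intro h; simpa using h
    · intro h; simp only [ContinuousLinearMap.coe_coe, ContinuousLinearMap.comp_apply,
        Submodule.subtypeL_apply]; exact h
  have hQmem : ∀ x, Q x ∈ X₀ := by
    intro x; rw [hmemX₀, hπN0]; simp
  have hQfix : ∀ x ∈ X₀, Q x = x := by
    intro x hx
    rw [hmemX₀] at hx
    rw [hQx_eq, hx, sub_zero]
  have hX₀closed : IsClosed (X₀ : Set X) := ContinuousLinearMap.isClosed_ker (N.subtypeL.comp πN)
  haveI : CompleteSpace X₀ := hX₀closed.completeSpace_coe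
  haveI : CompleteSpace R := hcl.completeSpace_coe
  -- the iso β : X₀ ≃ R
  set β : X₀ →L[ℂ] R :=
    ContinuousLinearMap.codRestrict (A.comp X₀.subtypeL) R (fun x => ⟨x, rfl⟩) with hβdef
  have hβapp : ∀ x : X₀, (β x : X) = A x := fun x => rfl
  have hβinj : LinearMap.ker (β : X₀ →ₗ[ℂ] R) = ⊥ := by
    rw [LinearMap.ker_eq_bot']
    intro x hx
    have hAx : A (x : X) = 0 := by
      have := congrArg (Subtype.val) hx
      rw [ContinuousLinearMap.coe_coe, hβapp] at this
      simpa using this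
    have hxN : (x : X) ∈ N := LinearMap.mem_ker.mpr hAx
    have h1 := hQn ⟨x, hxN⟩
    have h2 := hQfix x x.2
    apply Subtype.ext
    simp only at h1
    rw [h2] at h1
    simpa using h1
  have hβsurj : LinearMap.range (β : X₀ →ₗ[ℂ] R) = ⊤ := by
    rw [LinearMap.range_eq_top]
    rintro ⟨y, x, rfl⟩
    refine ⟨⟨Q x, hQmem x⟩, ?_⟩
    apply Subtype.ext
    rw [ContinuousLinearMap.coe_coe, hβapp]
    exact hAQx x
  set βe := ContinuousLinearEquiv.ofBijective β hβinj hβsurj with hβe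
  have hβe_app : ∀ x : X₀, βe x = β x := fun x => rfl
  -- the pseudoinverse T
  set T : X →L[ℂ] X :=
    X₀.subtypeL.comp ((βe.symm : R →L[ℂ] X₀).comp (P.codRestrict R hPmem)) with hTdef
  have hTapp : ∀ y, T y = (βe.symm ⟨P y, hPmem y⟩ : X) := fun y => rfl
  have hTPx : ∀ y, T (P y) = T y := by
    intro y
    rw [hTapp, hTapp]
    congr 2
    exact Subtype.ext (hPPx y)
  have hTmem : ∀ y, T y ∈ X₀ := fun y => by rw [hTapp]; exact (βe.symm ⟨P y, hPmem y⟩).2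
  have hQTx : ∀ y, Q (T y) = T y := fun y => hQfix _ (hTmem y)
  have hATx : ∀ y, A (T y) = P y := by
    intro y
    rw [hTapp]
    have := congrArg Subtype.val (βe.apply_symm_apply ⟨P y, hPmem y⟩)
    rw [hβe_app, hβapp] at this
    exact this
  have hTAx : ∀ x, T (A x) = Q x := by
    intro x
    rw [hTapp]
    have key : βe.symm ⟨P (A x), hPmem (A x)⟩ = ⟨Q x, hQmem x⟩ := by
      rw [ContinuousLinearEquiv.symm_apply_eq]
      apply Subtype.ext
      rw [hβe_app, hβapp]
      simp only
      rw [hAQx x, hPAx x]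
    rw [key]
  -- the finite dimensional complement Fc := ker P of the range
  set Fc : Submodule ℂ X := LinearMap.ker (P : X →ₗ[ℂ] X) with hFcdef
  have hFc0 : ∀ v : Fc, P (v : X) = 0 := fun v => LinearMap.mem_ker.mp v.2
  have hFcmem : ∀ x, P x = 0 → x ∈ Fc := fun x hx => LinearMap.mem_ker.mpr hx
  haveI hFcfin : FiniteDimensional ℂ Fc := by
    have hinj : Function.Injective ((R.mkQ).comp (Fc.subtype)) := by
      intro x y hxy
      have h3 : R.mkQ ((x : X) - y) = 0 := by
        rw [map_sub]
        simpa [LinearMap.comp_apply] using sub_eq_zero_of_eq hxy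
      rw [Submodule.mkQ_apply, Submodule.Quotient.mk_eq_zero] at h3
      have h1 : P ((x : X) - y) = (x : X) - y := hPr _ h3
      have h2 : P ((x : X) - y) = 0 := by
        rw [map_sub, hFc0 x, hFc0 y, sub_zero]
      apply Subtype.ext
      exact sub_eq_zero.mp (h1.symm.trans h2)
    exact FiniteDimensional.of_injective _ hinj
  have hPF : ∀ x, (1 - P) x ∈ Fc := by
    intro x
    apply hFcmem
    simp only [ContinuousLinearMap.sub_apply, ContinuousLinearMap.one_apply, map_sub]
    rw [hPPx, sub_self]
  set pF : X →L[ℂ] Fc := ContinuousLinearMap.codRestrict (1 - P) Fc hPF with hpFdef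
  have hpFapp : ∀ x, (pF x : X) = x - P x := fun x => rfl
  -- the analytic family c and its inverse
  set c : ℂ → X →L[ℂ] X := fun z => T * f z * Q + (1 - Q) with hcdef
  have hcx : ∀ z x, c z x = T (f z (Q x)) + (x - Q x) := by
    intro z x
    rw [hcdef]
    simp [ContinuousLinearMap.mul_apply]
  have hc1 : c z₁ = 1 := by
    ext x
    rw [hcx]
    rw [← hA, hAQx, hTAx]
    simp
  have hca : AnalyticAt ℂ c z₁ := by
    rw [hcdef]
    exact ((analyticAt_const.mul hfa).mul analyticAt_const).add analyticAt_const
  set ci : ℂ → X →L[ℂ] X := fun z => Ring.inverse (c z) with hcidef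
  have hcia : AnalyticAt ℂ ci z₁ := by
    have h := analyticAt_inverse (𝕜 := ℂ) (1 : (X →L[ℂ] X)ˣ)
    rw [Units.val_one] at h
    rw [← hc1] at h
    exact (h.comp hca : AnalyticAt ℂ (Ring.inverse ∘ c) z₁)
  have hu_ev : ∀ᶠ z in 𝓝 z₁, IsUnit (c z) := by
    have hmem : {x : X →L[ℂ] X | IsUnit x} ∈ 𝓝 (c z₁) := by
      apply Units.isOpen.mem_nhds; rw [hc1]; exact isUnit_one
    exact hca.continuousAt.preimage_mem_nhds hmem
  -- derived families
  set W : ℂ → X →L[ℂ] X := fun z => ci z * T with hWdef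
  set m : ℂ → X →L[ℂ] X := fun z => (1 - P) * f z * W z with hmdef
  set G : ℂ → X →L[ℂ] X := fun z => 1 - (W z * f z) * (1 - Q) with hGdef
  set L : ℂ → X →L[ℂ] X := fun z => 1 - m z * P with hLdef
  set D : ℂ → X →L[ℂ] X := fun z => L z * f z * G z with hDdef
  set t : ℂ → (N →L[ℂ] Fc) := fun z => pF.comp ((D z).comp N.subtypeL) with htdef
  have hWx : ∀ z y, W z y = ci z (T y) := by
    intro z y; rw [hWdef]; simp [ContinuousLinearMap.mul_apply]
  have hmx : ∀ z y, m z y = f z (W z y) - P (f z (W z y)) := by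
    intro z y; rw [hmdef]; simp [ContinuousLinearMap.mul_apply]
  have hGx : ∀ z x, G z x = x - W z (f z (x - Q x)) := by
    intro z x; rw [hGdef]; simp [ContinuousLinearMap.mul_apply]
  have hLx : ∀ z y, L z y = y - m z (P y) := by
    intro z y; rw [hLdef]; simp [ContinuousLinearMap.mul_apply]
  have hDx : ∀ z x, D z x = L z (f z (G z x)) := by
    intro z x; rw [hDdef]; simp [ContinuousLinearMap.mul_apply]
  have htx0 : ∀ z (n : N), ((t z) n : X) = D z (n : X) - P (D z (n : X)) := by
    intro z n; rw [htdef]; simp [hpFapp]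
  -- analyticity
  have hWa : AnalyticAt ℂ W z₁ := hcia.mul analyticAt_const
  have hma : AnalyticAt ℂ m z₁ := (analyticAt_const.mul hfa).mul hWa
  have hGa : AnalyticAt ℂ G z₁ := analyticAt_const.sub ((hWa.mul hfa).mul analyticAt_const)
  have hLa : AnalyticAt ℂ L z₁ := analyticAt_const.sub (hma.mul analyticAt_const)
  have hDa : AnalyticAt ℂ D z₁ := (hLa.mul hfa).mul hGa
  have hta : AnalyticAt ℂ t z₁ := by
    have heq : t = fun z => ((ContinuousLinearMap.compL ℂ N X Fc pF).comp
        ((ContinuousLinearMap.compL ℂ N X X).flip N.subtypeL)) (D z) := by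
      funext z
      rw [htdef]
      simp only [ContinuousLinearMap.comp_apply, ContinuousLinearMap.flip_apply,
        ContinuousLinearMap.compL_apply]
    rw [heq]
    exact (ContinuousLinearMap.analyticAt _ _).comp hDa
  have hci_eq : ∀ w, ci w = Ring.inverse (c w) := fun w => rfl
  clear_value Q P X₀ β βe T Fc pF c ci W m G L D t
  -- the key pointwise equivalence
  have key : ∀ z, IsUnit (c z) → (Function.Bijective (f z) ↔ Function.Bijective (t z)) := by
    intro z hu
    have hinv1 : ∀ x, c z (ci z x) = x := by
      intro x
      have hop : c z * ci z = 1 := by rw [hci_eq]; exact Ring.mul_inverse_cancel _ hu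
      have := DFunLike.congr_fun hop x
      simpa [ContinuousLinearMap.mul_apply] using this
    have hinv2 : ∀ x, ci z (c z x) = x := by
      intro x
      have hop : ci z * c z = 1 := by rw [hci_eq]; exact Ring.inverse_mul_cancel _ hu
      have := DFunLike.congr_fun hop x
      simpa [ContinuousLinearMap.mul_apply] using this
    have e2' : ∀ x, ci z (x - Q x) = x - Q x := by
      intro x
      have h1 : c z (x - Q x) = x - Q x := by
        rw [hcx]
        have hq : Q (x - Q x) = 0 := by rw [map_sub, hQQx, sub_self]
        rw [hq, sub_zero, map_zero, map_zero, zero_add]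
      conv_lhs => rw [← h1]
      rw [hinv2]
    have e1' : ∀ y, ci z y - Q (ci z y) = y - Q y := by
      intro y
      have h1 : ∀ w, c z w - Q (c z w) = w - Q w := by
        intro w
        rw [hcx, map_add, map_sub, hQTx, hQQx]
        abel
      have h2 := h1 (ci z y)
      rw [hinv1] at h2
      exact h2.symm
    have hQWx : ∀ y, Q (W z y) = W z y := by
      intro y
      have h3 := e1' (T y)
      rw [hQTx, sub_self] at h3
      rw [hWx]
      exact (sub_eq_zero.mp h3).symm
    have hWPx : ∀ y, W z (P y) = W z y := by intro y; rw [hWx, hWx, hTPx]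
    have hTgQ : ∀ x, T (f z (Q x)) = c z x - (x - Q x) := by
      intro x
      rw [hcx]
      abel
    have hWgQ : ∀ x, W z (f z (Q x)) = Q x := by
      intro x
      rw [hWx, hTgQ, map_sub, hinv2, e2']
      exact sub_sub_cancel x (Q x)
    have hTgW : ∀ y, T (f z (W z y)) = T y := by
      intro y
      have h1 : W z y = Q (W z y) := (hQWx y).symm
      calc T (f z (W z y)) = T (f z (Q (W z y))) := by rw [← h1]
        _ = c z (W z y) - (W z y - Q (W z y)) := hTgQ _
        _ = c z (W z y) := by rw [hQWx, sub_self, sub_zero]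
        _ = c z (ci z (T y)) := by rw [hWx]
        _ = T y := hinv1 _
    have hPgW : ∀ y, P (f z (W z y)) = P y := by
      intro y
      rw [← hATx (f z (W z y)), hTgW, hATx]
    have hmPx : ∀ y, m z (P y) = m z y := by intro y; rw [hmx, hmx, hWPx]
    have hPmx : ∀ y, P (m z y) = 0 := by intro y; rw [hmx, map_sub, hPPx, sub_self]
    have hGQ : ∀ x, G z (Q x) = Q x := by
      intro x
      rw [hGx]
      have h0 : Q x - Q (Q x) = 0 := by rw [hQQx, sub_self]
      rw [h0, map_zero, map_zero, sub_zero]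
    have K1 : ∀ x, D z (Q x) = P (f z (Q x)) := by
      intro x
      rw [hDx, hGQ, hLx, hmPx, hmx, hWgQ]
      exact sub_sub_cancel _ _
    have K2 : ∀ x, Q x = 0 → P (D z x) = 0 := by
      intro x hq0
      have hGz : G z x = x - W z (f z x) := by rw [hGx, hq0, sub_zero]
      have hD : D z x = f z x - f z (W z (f z x)) := by
        rw [hDx, hGz, map_sub, hLx]
        have hp0 : P (f z x - f z (W z (f z x))) = 0 := by
          rw [map_sub, hPgW, sub_self]
        rw [hp0, map_zero, sub_zero]
      rw [hD, map_sub, hPgW, sub_self]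
    have K3 : ∀ y, D z (W z (P y)) = P y := by
      intro y
      rw [hWPx]
      have hGW : G z (W z y) = W z y := by
        rw [hGx]
        have h0 : W z y - Q (W z y) = 0 := by rw [hQWx, sub_self]
        rw [h0, map_zero, map_zero, sub_zero]
      rw [hDx, hGW, hLx, hPgW, hmPx, hmx, hPgW]
      exact sub_sub_cancel _ _
    have K4 : ∀ x, P (f z (Q x)) = 0 → Q x = 0 := by
      intro x h0
      have h1 : c z (Q x) = 0 := by
        rw [hcx]
        have h2 : T (f z (Q (Q x))) = 0 := by
          rw [hQQx, ← hTPx (f z (Q x)), h0, map_zero]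
        rw [h2, hQQx, sub_self, add_zero]
      have h3 := congrArg (ci z) h1
      rw [hinv2, map_zero] at h3
      exact h3
    -- L and G are bijective
    have hLeq : Function.LeftInverse (fun y => y + m z (P y)) (L z) := by
      intro y
      simp only [hLx]
      have h4 : P (y - m z (P y)) = P y := by rw [map_sub, hPmx, sub_zero]
      rw [h4, sub_add_cancel]
    have hLeq2 : Function.RightInverse (fun y => y + m z (P y)) (L z) := by
      intro y
      simp only [hLx]
      have h4 : P (y + m z (P y)) = P y := by rw [map_add, hPmx, add_zero]
      rw [h4, add_sub_cancel_right]
    have hGeq : Function.LeftInverse (fun x => x + W z (f z (x - Q x))) (G z) := by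
      intro x
      simp only [hGx]
      have h5 : (x - W z (f z (x - Q x))) - Q (x - W z (f z (x - Q x)))
          = x - Q x := by
        rw [map_sub Q, hQWx]
        abel
      rw [h5, sub_add_cancel]
    have hGeq2 : Function.RightInverse (fun x => x + W z (f z (x - Q x))) (G z) := by
      intro x
      simp only [hGx]
      have h5 : (x + W z (f z (x - Q x))) - Q (x + W z (f z (x - Q x)))
          = x - Q x := by
        rw [map_add Q, hQWx]
        abel
      rw [h5, add_sub_cancel_right]
    let eL : X ≃ X := ⟨L z, fun y => y + m z (P y), hLeq, hLeq2⟩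
    let eG : X ≃ X := ⟨G z, fun x => x + W z (f z (x - Q x)), hGeq, hGeq2⟩
    have hDcomp : ⇑(D z) = ⇑eL ∘ ⇑(f z) ∘ ⇑eG := by
      funext x
      exact hDx z x
    have hbijD : Function.Bijective (f z) ↔ Function.Bijective (D z) := by
      rw [hDcomp]
      rw [Equiv.comp_bijective, Equiv.bijective_comp]
    -- now D bijective ↔ t bijective
    have htx : ∀ n : N, ((t z) n : X) = D z (n : X) := by
      intro n
      rw [htx0]
      have h6 : P (D z (n : X)) = 0 := K2 _ (hQn n)
      rw [h6, sub_zero]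
    have hsplitP : ∀ x, P (D z x) = D z (Q x) := by
      intro x
      have hsplit : D z x = D z (Q x) + D z (x - Q x) := by
        rw [← map_add]
        congr 1
        abel
      have hq0 : Q (x - Q x) = 0 := by rw [map_sub, hQQx, sub_self]
      rw [hsplit, map_add, K2 _ hq0, add_zero, K1, hPPx, ← K1]
    have hmemN : ∀ x, Q x = 0 → x ∈ N := by
      intro x hq
      apply LinearMap.mem_ker.mpr
      show A x = 0
      rw [← hAQx, hq, map_zero]
    have hDt : Function.Bijective (D z) ↔ Function.Bijective (t z) := by
      constructor
      · intro hD
        constructor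
        · intro n n' h
          have h7 : D z (n : X) = D z (n' : X) := by
            rw [← htx, ← htx, h]
          exact Subtype.ext (hD.1 h7)
        · intro v
          obtain ⟨x, hx⟩ := hD.2 (v : X)
          have hPv : P (v : X) = 0 := hFc0 v
          have h8 : D z (Q x) = 0 := by
            rw [← hsplitP, hx, hPv]
          have h9 : Q x = 0 := K4 _ (by rw [← K1]; exact h8)
          refine ⟨⟨x, hmemN x h9⟩, ?_⟩
          apply Subtype.ext
          rw [htx]
          exact hx
      · intro ht
        constructor
        · have h10 : ∀ x, D z x = 0 → x = 0 := by
            intro x hx0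
            have h8 : D z (Q x) = 0 := by rw [← hsplitP, hx0, map_zero]
            have h9 : Q x = 0 := K4 _ (by rw [← K1]; exact h8)
            have h11 : ((t z) ⟨x, hmemN x h9⟩ : X) = 0 := by
              rw [htx]; exact hx0
            have h12 : (⟨x, hmemN x h9⟩ : N) = 0 := by
              apply ht.1
              apply Subtype.ext
              rw [h11]
              simp
            simpa using congrArg Subtype.val h12
          intro a b hab
          have : D z (a - b) = 0 := by rw [map_sub, hab, sub_self]
          have := h10 _ this
          exact sub_eq_zero.mp this
        · intro y
          obtain ⟨n, hn⟩ := ht.2 (pF y)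
          refine ⟨W z (P y) + (n : X), ?_⟩
          rw [map_add, K3, ← htx, hn, hpFapp]
          abel
    exact hbijD.trans hDt
  -- case split on dimensions
  haveI : FiniteDimensional ℂ N := hker
  by_cases hrank : Module.finrank ℂ N = Module.finrank ℂ Fc
  · -- equal ranks: use the determinant of the finite dimensional reduction
    obtain ⟨e⟩ := FiniteDimensional.nonempty_linearEquiv_of_finrank_eq hrank
    let eL : Fc →L[ℂ] N := LinearMap.toContinuousLinearMap e.symm.toLinearMap
    have heLx : ∀ v : Fc, eL v = e.symm v := fun v => rfl
    set s : ℂ → (N →L[ℂ] N) := fun z => eL.comp (t z) with hsdef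
    have hsa : AnalyticAt ℂ s z₁ := by
      have heq : s = fun z => (ContinuousLinearMap.compL ℂ N Fc N eL) (t z) := by
        funext z
        rw [hsdef]
        simp only [ContinuousLinearMap.compL_apply]
      rw [heq]
      exact (ContinuousLinearMap.analyticAt _ _).comp hta
    have hdeta : AnalyticAt ℂ (fun z => LinearMap.det ((s z : N →ₗ[ℂ] N))) z₁ :=
      aux_analyticAt_det hsa
    have hbij_s : ∀ z, Function.Bijective (t z) ↔ Function.Bijective (s z) := by
      intro z
      have hcomp : ⇑(s z) = ⇑e.symm ∘ ⇑(t z) := by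
        funext n
        rw [hsdef]
        simp only [ContinuousLinearMap.comp_apply]
        exact heLx _
      rw [hcomp]
      exact (Function.Bijective.of_comp_iff' e.symm.bijective ⇑(t z)).symm
    rcases hdeta.eventually_eq_zero_or_eventually_ne_zero with h0 | hne
    · left
      filter_upwards [hu_ev, h0] with z hu h0z
      intro hbij
      have hbt : Function.Bijective (s z) := (hbij_s z).mp ((key z hu).mp hbij)
      have : LinearMap.det ((s z : N →ₗ[ℂ] N)) ≠ 0 := by
        apply (aux_det_ne_zero_iff _).mpr
        exact hbt
      exact this h0z
    · right
      filter_upwards [hne, hu_ev.filter_mono nhdsWithin_le_nhds] with z hnez hu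
      apply (key z hu).mpr
      apply (hbij_s z).mpr
      exact (aux_det_ne_zero_iff _).mp hnez
  · -- unequal ranks: never bijective near z₁
    left
    filter_upwards [hu_ev] with z hu
    intro hbij
    have hbt : Function.Bijective (t z) := (key z hu).mp hbij
    have : Module.finrank ℂ N = Module.finrank ℂ Fc :=
      (LinearEquiv.ofBijective ((t z : N →ₗ[ℂ] Fc)) hbt).finrank_eq
    exact hrank this


/-- Proposition S113 (first part): for an analytic family of Fredholm operators on a connected
open set `U ⊆ ℂ` which is invertible at one point, the set where it fails to be bijective is
discrete in `U` (it has no accumulation point inside `U`). -/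
theorem stmt0 {X : Type*} [NormedAddCommGroup X] [NormedSpace ℂ X] [CompleteSpace X]
    (U : Set ℂ) (hUopen : IsOpen U) (hUconn : IsConnected U)
    (f : ℂ → X →L[ℂ] X) (hf : AnalyticOnNhd ℂ f U)
    (hFred : ∀ z ∈ U, IsFredholm (f z))
    (z₀ : ℂ) (hz₀ : z₀ ∈ U) (hbij : Function.Bijective (f z₀)) :
    ∀ z ∈ U, ¬ AccPt z (Filter.principal {w ∈ U | ¬ Function.Bijective (f w)}) := by
  have LD : ∀ z ∈ U, (∀ᶠ w in 𝓝 z, ¬ Function.Bijective (f w)) ∨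
      (∀ᶠ w in 𝓝[≠] z, Function.Bijective (f w)) := by
    intro z hz
    obtain ⟨h1, h2, h3⟩ := hFred z hz
    exact aux_dichotomy f z (hf z hz) h1 h2 h3
  set O₁ : Set ℂ := {z : ℂ | ∀ᶠ w in 𝓝 z, ¬ Function.Bijective (f w)} with hO₁
  set O₂ : Set ℂ := {z : ℂ | ∀ᶠ w in 𝓝[≠] z, Function.Bijective (f w)} with hO₂
  have hO₁open : IsOpen O₁ := isOpen_setOf_eventually_nhds
  have hO₂open : IsOpen O₂ := by
    rw [isOpen_iff_mem_nhds]
    intro z hz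
    rw [hO₂, Set.mem_setOf_eq, eventually_nhdsWithin_iff] at hz
    obtain ⟨V, hVsub, hVopen, hzV⟩ := eventually_nhds_iff.mp hz
    apply Filter.mem_of_superset (hVopen.mem_nhds hzV)
    intro w hw
    show w ∈ O₂
    rw [hO₂, Set.mem_setOf_eq]
    by_cases hwz : w = z
    · subst hwz
      filter_upwards [mem_nhdsWithin_of_mem_nhds (hVopen.mem_nhds hw),
        self_mem_nhdsWithin] with u huV huz
      exact hVsub u huV huz
    · apply Filter.Eventually.filter_mono nhdsWithin_le_nhds
      have hwmem : w ∈ ({z}ᶜ : Set ℂ) := hwz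
      filter_upwards [hVopen.mem_nhds hw,
        (isOpen_compl_singleton).mem_nhds hwmem] with u huV huz
      exact hVsub u huV huz
  have hdisj : Disjoint O₂ O₁ := by
    rw [Set.disjoint_left]
    intro z h2 h1
    rw [hO₂, Set.mem_setOf_eq] at h2
    rw [hO₁, Set.mem_setOf_eq] at h1
    have h1' : ∀ᶠ w in 𝓝[≠] z, ¬ Function.Bijective (f w) :=
      h1.filter_mono nhdsWithin_le_nhds
    obtain ⟨w, hw1, hw2⟩ := (h1'.and h2).exists
    exact hw1 hw2
  have hsub : U ⊆ O₂ ∪ O₁ := by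
    intro z hz
    rcases LD z hz with h | h
    · exact Or.inr h
    · exact Or.inl h
  have hz₀O₂ : z₀ ∈ O₂ := by
    rcases LD z₀ hz₀ with h | h
    · exact absurd hbij h.self_of_nhds
    · exact h
  have hUO₂ : U ⊆ O₂ :=
    hUconn.isPreconnected.subset_left_of_subset_union hO₂open hO₁open hdisj hsub
      ⟨z₀, hz₀, hz₀O₂⟩
  intro z hz hacc
  have hzO₂ : z ∈ O₂ := hUO₂ hz
  rw [accPt_iff_frequently] at hacc
  rw [hO₂, Set.mem_setOf_eq, eventually_nhdsWithin_iff] at hzO₂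
  have hev : ∀ᶠ w in 𝓝 z, ¬ (w ≠ z ∧ w ∈ {w ∈ U | ¬ Function.Bijective (f w)}) := by
    filter_upwards [hzO₂] with w hw
    rintro ⟨hwz, hwU, hnb⟩
    exact hnb (hw hwz)
  obtain ⟨w, hw1, hw2⟩ := (hacc.and_eventually hev).exists
  exact hw2 hw1
end

section
/- Let U ⊆ ℂ be open, X a complex Banach space, f : U → B(X) analytic, and ξ ∈ U such that f(ξ) is Fredholm of index 0, i.e. ker f(ξ) is finite-dimensional, the range of f(ξ) is closed, and dim(X / range f(ξ)) = dim ker f(ξ). Then there exist an open neighborhood U′ of ξ contained in U, a finite-dimensional subspace V ⊆ X and a closed subspace W ⊆ X with X = V ⊕ W, and analytic maps φ, ψ : U′ → B(X) taking values in the invertible operators and h : U′ → B(V), such that for every z ∈ U′ the operator φ(z) ∘ f(z) ∘ ψ(z) maps V into V, acting on V as h(z), and restricts to the identity on W. -/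
open ContinuousLinearMap


set_option maxHeartbeats 1000000 in
/-- Assertion 1 in the proof of Proposition S113: local factorization of an analytic family
through a finite-dimensional block. If `f : U → B(X)` is analytic and `f(ξ)` is Fredholm of
index `0`, then near `ξ` one can write `φ(z) f(z) ψ(z) = h(z) ⊕ Id_W` with respect to a
decomposition `X = V ⊕ W`, `dim V < ∞`, with `φ, ψ` analytic families of invertible operators
and `h` an analytic family of operators on `V`. -/
theorem stmt2 {X : Type*} [NormedAddCommGroup X] [NormedSpace ℂ X] [CompleteSpace X]
    (U : Set ℂ) (hUopen : IsOpen U)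
    (f : ℂ → X →L[ℂ] X) (hf : AnalyticOnNhd ℂ f U)
    (ξ : ℂ) (hξ : ξ ∈ U)
    (hker : FiniteDimensional ℂ (LinearMap.ker (f ξ : X →ₗ[ℂ] X)))
    (hran : IsClosed (LinearMap.range (f ξ : X →ₗ[ℂ] X) : Set X))
    (hcoker : FiniteDimensional ℂ (X ⧸ LinearMap.range (f ξ : X →ₗ[ℂ] X)))
    (hind : Module.finrank ℂ (X ⧸ LinearMap.range (f ξ : X →ₗ[ℂ] X))
      = Module.finrank ℂ (LinearMap.ker (f ξ : X →ₗ[ℂ] X))) :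
    ∃ U' : Set ℂ, IsOpen U' ∧ ξ ∈ U' ∧ U' ⊆ U ∧
      ∃ V W : Submodule ℂ X, FiniteDimensional ℂ V ∧ IsClosed (W : Set X) ∧ IsCompl V W ∧
        ∃ φ ψ : ℂ → X →L[ℂ] X, AnalyticOnNhd ℂ φ U' ∧ AnalyticOnNhd ℂ ψ U' ∧
          (∀ z ∈ U', IsUnit (φ z) ∧ IsUnit (ψ z)) ∧
          ∃ h : ℂ → (V →L[ℂ] V), AnalyticOnNhd ℂ h U' ∧
            ∀ z ∈ U',
              (∀ v : V, φ z (f z (ψ z (v : X))) = (h z v : X)) ∧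
              (∀ w : X, w ∈ W → φ z (f z (ψ z w)) = w) := by
  set Vs := LinearMap.ker (f ξ : X →ₗ[ℂ] X) with hVs
  obtain ⟨P', hP'⟩ := Submodule.ClosedComplemented.of_finiteDimensional Vs
  obtain ⟨s, hs⟩ := (LinearMap.range (f ξ : X →ₗ[ℂ] X)).mkQ.exists_rightInverse_of_surjective
    (LinearMap.range_eq_top.2 (Submodule.mkQ_surjective _))
  have hsq : ∀ y, (LinearMap.range (f ξ : X →ₗ[ℂ] X)).mkQ (s y) = y := fun y => by
    simpa [← LinearMap.comp_apply, hs] using rfl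
  have hsinj : Function.Injective s := by
    intro a b hab
    have := congrArg (LinearMap.range (f ξ : X →ₗ[ℂ] X)).mkQ hab
    simpa [hsq] using this
  set V₀ := LinearMap.range s with hV₀
  have hfd : FiniteDimensional ℂ V₀ :=
    Module.Finite.equiv (LinearEquiv.ofInjective s hsinj)
  have hfr : Module.finrank ℂ V₀ = Module.finrank ℂ (X ⧸ LinearMap.range (f ξ : X →ₗ[ℂ] X)) :=
    LinearMap.finrank_range_of_inj hsinj
  have e : Vs ≃ₗ[ℂ] V₀ := LinearEquiv.ofFinrankEq _ _ (by rw [hfr, hind])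
  -- complementarity of range and V₀
  have hdisj : ∀ x : X, x ∈ LinearMap.range (f ξ : X →ₗ[ℂ] X) → x ∈ V₀ → x = 0 := by
    rintro x hx ⟨y, rfl⟩
    have : ((LinearMap.range (f ξ : X →ₗ[ℂ] X)).mkQ) (s y) = 0 := (Submodule.Quotient.mk_eq_zero _).2 hx
    rw [hsq] at this
    rw [this, map_zero]
  -- the operators
  set K : X →L[ℂ] X := V₀.subtypeL ∘L (LinearMap.toContinuousLinearMap
      (e.toLinearMap)) ∘L P' with hK
  set P : X →L[ℂ] X := Vs.subtypeL ∘L P' with hP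
  have hKapp : ∀ x : X, K x = (e (P' x) : X) := fun x => rfl
  have hPapp : ∀ x : X, P x = ((P' x : Vs) : X) := fun x => rfl
  have hPP' : ∀ x : X, P' (P x) = P' x := fun x => hP' (P' x)
  have hKP : K ∘L P = K := by
    ext x
    rw [ContinuousLinearMap.comp_apply, hKapp, hKapp, hPP']
  set F : ℂ → X →L[ℂ] X := fun z => f z + K with hF
  have hFan : AnalyticOnNhd ℂ F U := fun z hz => (hf z hz).add analyticAt_const
  -- F ξ is bijective
  have hFinj : LinearMap.ker (F ξ : X →ₗ[ℂ] X) = ⊥ := by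
    rw [LinearMap.ker_eq_bot']
    intro x hx
    have hx' : f ξ x + K x = 0 := hx
    have h1 : f ξ x = 0 ∧ K x = 0 := by
      have hm : f ξ x ∈ LinearMap.range (f ξ : X →ₗ[ℂ] X) := LinearMap.mem_range_self _ x
      have hm0 : f ξ x ∈ V₀ := by
        have : f ξ x = -K x := by linear_combination (norm := module) hx'
        rw [this]
        exact neg_mem (by rw [hKapp]; exact Subtype.coe_prop _)
      have := hdisj _ hm hm0
      exact ⟨this, by rw [this] at hx'; simpa using hx'⟩
    have hxker : x ∈ Vs := h1.1
    have : ((e (P' x) : X)) = 0 := by rw [← hKapp]; exact h1.2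
    have he0 : e (P' x) = 0 := Subtype.coe_injective (by simpa using this)
    have : P' x = 0 := by simpa using congrArg e.symm he0
    have : (⟨x, hxker⟩ : Vs) = 0 := by rw [← hP' ⟨x, hxker⟩]; exact this
    simpa using congrArg (Subtype.val) this
  have hFsurj : LinearMap.range (F ξ : X →ₗ[ℂ] X) = ⊤ := by
    rw [LinearMap.range_eq_top]
    intro y
    -- decompose y = r + v₀ along range ⊕ V₀ : use section
    obtain ⟨x, hx⟩ : ∃ x, f ξ x = y - s ((LinearMap.range (f ξ : X →ₗ[ℂ] X)).mkQ y) := by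
      have : y - s ((LinearMap.range (f ξ : X →ₗ[ℂ] X)).mkQ y) ∈ LinearMap.range (f ξ : X →ₗ[ℂ] X) := by
        rw [← Submodule.Quotient.mk_eq_zero, ← Submodule.mkQ_apply, map_sub, hsq, sub_self]
      exact this
    set v₀ : V₀ := ⟨s ((LinearMap.range (f ξ : X →ₗ[ℂ] X)).mkQ y), LinearMap.mem_range_self _ _⟩ with hv₀
    refine ⟨x + ((e.symm (v₀ - e (P' x)) : Vs) : X), ?_⟩
    have hfc : f ξ ((e.symm (v₀ - e (P' x)) : Vs) : X) = 0 :=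
      (e.symm (v₀ - e (P' x))).2
    have hKc : K ((e.symm (v₀ - e (P' x)) : Vs) : X) = ((v₀ - e (P' x) : V₀) : X) := by
      rw [hKapp, hP' (e.symm (v₀ - e (P' x)))]; simp
    show f ξ _ + K _ = y
    rw [map_add, map_add, hfc, hKc, hx, hKapp]
    push_cast
    abel
  have hFunit : IsUnit (F ξ) :=
    ContinuousLinearMap.isUnit_iff_bijective.2
      ⟨LinearMap.ker_eq_bot.1 hFinj, LinearMap.range_eq_top.1 hFsurj⟩
  -- the neighborhood
  set U' : Set ℂ := U ∩ F ⁻¹' {T | IsUnit T} with hU'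
  have hU'open : IsOpen U' := by
    rw [isOpen_iff_mem_nhds]
    rintro z ⟨hzU, hzu⟩
    exact Filter.inter_mem (hUopen.mem_nhds hzU)
      ((hFan z hzU).continuousAt.preimage_mem_nhds (Units.isOpen.mem_nhds hzu))
  have hξU' : ξ ∈ U' := ⟨hξ, hFunit⟩
  -- φ, G, ψ
  set φ : ℂ → X →L[ℂ] X := fun z => Ring.inverse (F z) with hφ
  have hφan : AnalyticOnNhd ℂ φ U' := fun z hz => by
    have h1 : AnalyticAt ℂ (Ring.inverse : (X →L[ℂ] X) → X →L[ℂ] X) (F z) := by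
      have := analyticAt_inverse (𝕜 := ℂ) (hz.2.unit)
      rwa [IsUnit.unit_spec] at this
    exact h1.comp (hFan z hz.1)
  set G : ℂ → X →L[ℂ] X := fun z => φ z * K with hG
  have hGan : AnalyticOnNhd ℂ G U' := fun z hz => (hφan z hz).mul analyticAt_const
  have hGP : ∀ z, G z * P = G z := fun z => by
    show φ z * K * P = φ z * K
    rw [mul_assoc]
    exact congrArg (fun T => φ z * T) hKP
  have hG1P : ∀ z, G z * (1 - P) = 0 := fun z => by
    rw [mul_sub, mul_one, hGP, sub_self]
  set ψ : ℂ → X →L[ℂ] X := fun z => 1 + (1 - P) * G z with hψ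
  have hψan : AnalyticOnNhd ℂ ψ U' := fun z hz =>
    analyticAt_const.add (analyticAt_const.mul (hGan z hz))
  have hψunit : ∀ z, IsUnit (ψ z) := by
    intro z
    refine ⟨⟨ψ z, 1 - (1 - P) * G z, ?_, ?_⟩, rfl⟩ <;>
    · show _ = (1 : X →L[ℂ] X)
      have hN : ((1 - P) * G z) * ((1 - P) * G z) = 0 := by
        rw [mul_assoc, ← mul_assoc (G z), hG1P, zero_mul, mul_zero]
      first
      | (have : (1 + (1 - P) * G z) * (1 - (1 - P) * G z)
            = 1 - ((1 - P) * G z) * ((1 - P) * G z) := by noncomm_ring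
         rw [this, hN, sub_zero])
      | (have : (1 - (1 - P) * G z) * (1 + (1 - P) * G z)
            = 1 - ((1 - P) * G z) * ((1 - P) * G z) := by noncomm_ring
         rw [this, hN, sub_zero])
  have hφunit : ∀ z ∈ U', IsUnit (φ z) := by
    intro z hz
    rw [hφ]
    show IsUnit (Ring.inverse (F z))
    rw [← hz.2.unit_spec, Ring.inverse_unit]
    exact (hz.2.unit⁻¹).isUnit
  -- the key identity
  have hkey : ∀ z ∈ U', φ z * f z * ψ z = 1 - P * G z := by
    intro z hz
    have hfz : f z = F z - K := (add_sub_cancel_right (f z) K).symm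
    have h1 : φ z * f z = 1 - G z := by
      simp only [hφ, hG, hfz]
      rw [mul_sub, Ring.inverse_mul_cancel _ hz.2]
    rw [h1, hψ]
    have expand : (1 - G z) * (1 + (1 - P) * G z)
        = 1 - P * G z - (G z * (1 - P)) * G z := by noncomm_ring
    rw [expand, hG1P, zero_mul, sub_zero]
  have hptwise : ∀ z ∈ U', ∀ x : X, φ z (f z (ψ z x)) = x - P (G z x) := by
    intro z hz x
    have := congrFun (congrArg (DFunLike.coe) (hkey z hz)) x
    simpa [ContinuousLinearMap.mul_apply] using this
  -- h
  set h : ℂ → (Vs →L[ℂ] Vs) := fun z => P' ∘L (1 - P * G z) ∘L Vs.subtypeL with hh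
  have hhan : AnalyticOnNhd ℂ h U' := by
    have hfun : h = fun z => ((ContinuousLinearMap.compL ℂ Vs X Vs).flip Vs.subtypeL)
        (((ContinuousLinearMap.compL ℂ X X Vs) P') (1 - P * G z)) := rfl
    rw [hfun]
    intro z hz
    exact (((ContinuousLinearMap.compL ℂ Vs X Vs).flip Vs.subtypeL).comp
      ((ContinuousLinearMap.compL ℂ X X Vs) P')).analyticAt _ |>.comp
      (analyticAt_const.sub (analyticAt_const.mul (hGan z hz)))
  refine ⟨U', hU'open, hξU', Set.inter_subset_left, Vs, LinearMap.ker (P' : X →ₗ[ℂ] Vs), hker,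
    ContinuousLinearMap.isClosed_ker P', LinearMap.isCompl_of_proj hP',
    φ, ψ, hφan, hψan, fun z hz => ⟨hφunit z hz, hψunit z⟩, h, hhan, ?_⟩
  intro z hz
  constructor
  · intro v
    rw [hptwise z hz]
    have e1 : ((h z v : Vs) : X) = ((P' ((1 - P * G z) (v : X)) : Vs) : X) := rfl
    have e2 : (1 - P * G z) (v : X) = ((v - P' (G z (v : X)) : Vs) : X) := by
      rw [ContinuousLinearMap.sub_apply, ContinuousLinearMap.one_apply,
        ContinuousLinearMap.mul_apply, hPapp]
      push_cast
      rfl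
    rw [e1, e2, hP']
    push_cast
    rw [← hPapp]
  · intro w hw
    rw [hptwise z hz]
    have hGw : G z w = 0 := by
      show φ z (K w) = 0
      have : K w = 0 := by
        rw [hKapp, show P' w = 0 from hw, map_zero, Submodule.coe_zero]
      rw [this, map_zero]
    rw [hGw, map_zero, sub_zero]
end

section
/- Let ν > 0, k ∈ ℕ, and α ∈ ℂ with Re α = 1/2 − ν. Let φ : (0,∞) → ℂ be bounded and measurable with φ(y) = 0 for y > r, for some r > 0. For f ∈ L²((0,∞)) define (K(φf))(x) = ∫_x^∞ (x/y)^{−α} y^{ν−1} (log(x/y))^k φ(y) f(y) dy, where (x/y)^{−α} = exp(−α · log(x/y)). Then for every δ with 0 < δ < 1 there exists a constant c > 0 (depending on δ, k, φ) such that for every f ∈ L²((0,∞)) and every x with 0 < x ≤ δ: |(K(φf))(x)| ≤ ‖φ‖_∞ · x^{ν−1/2} · ( |log x|^{k+1/2} (∫₀^δ |f(y)|² dy)^{1/2} + c |log x|^k ‖f‖_{L²((0,∞))} ). -/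
open MeasureTheory

lemma stmt7_mul_int {s : Set ℝ} {u v : ℝ → ℝ} (hu : Measurable u) (hv : Measurable v)
    (hu2 : IntegrableOn (fun y => u y ^ 2) s) (hv2 : IntegrableOn (fun y => v y ^ 2) s) :
    IntegrableOn (fun y => u y * v y) s := by
  refine Integrable.mono' ((hu2.add hv2).div_const 2)
    ((hu.mul hv).aestronglyMeasurable) (ae_of_all _ fun y => ?_)
  have h1 := sq_nonneg (|u y| - |v y|)
  have h2 : |u y| ^ 2 = u y ^ 2 := sq_abs _
  have h3 : |v y| ^ 2 = v y ^ 2 := sq_abs _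
  rw [Real.norm_eq_abs, abs_mul]
  simp only [Pi.add_apply]
  nlinarith [abs_nonneg (u y), abs_nonneg (v y)]

lemma stmt7_cs {s : Set ℝ} (hs : MeasurableSet s) {u v : ℝ → ℝ}
    (hu : Measurable u) (hv : Measurable v)
    (hu0 : ∀ y ∈ s, 0 ≤ u y) (hv0 : ∀ y ∈ s, 0 ≤ v y)
    (hu2 : IntegrableOn (fun y => u y ^ 2) s) (hv2 : IntegrableOn (fun y => v y ^ 2) s) :
    ∫ y in s, u y * v y
      ≤ (∫ y in s, u y ^ 2) ^ ((1 : ℝ) / 2) * (∫ y in s, v y ^ 2) ^ ((1 : ℝ) / 2) := by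
  have hconj : Real.HolderConjugate 2 2 := Real.HolderConjugate.two_two
  have h2 : ENNReal.ofReal (2 : ℝ) = 2 := by simp
  have hu' : MemLp u (ENNReal.ofReal (2 : ℝ)) (volume.restrict s) := by
    rw [h2]; exact (memLp_two_iff_integrable_sq hu.aestronglyMeasurable).2 hu2
  have hv' : MemLp v (ENNReal.ofReal (2 : ℝ)) (volume.restrict s) := by
    rw [h2]; exact (memLp_two_iff_integrable_sq hv.aestronglyMeasurable).2 hv2
  have h := integral_mul_le_Lp_mul_Lq_of_nonneg hconj
    ((ae_restrict_iff' hs).2 (ae_of_all _ hu0)) ((ae_restrict_iff' hs).2 (ae_of_all _ hv0)) hu' hv'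
  have hcast : ∀ t : ℝ, t ^ (2 : ℝ) = t ^ 2 := fun t => by
    rw [show (2 : ℝ) = ((2 : ℕ) : ℝ) by norm_num, Real.rpow_natCast]
  simpa only [hcast] using h

/-- Lemma S139: pointwise estimate for the model Mellin convolution operator
`(K(φf))(x) = ∫_x^∞ (x/y)^{-α} y^{ν-1} log^k(x/y) φ(y) f(y) dy` with `Re α = 1/2 - ν`:
for `0 < δ < 1` there is `c > 0` such that for all `f ∈ L²((0,∞))` and `0 < x ≤ δ`,
`|(K(φf))(x)| ≤ ‖φ‖_∞ x^{ν-1/2} (|log x|^{k+1/2} (∫₀^δ |f|²)^{1/2} + c |log x|^k ‖f‖₂)`. -/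
theorem stmt7 (ν : ℝ) (hν : 0 < ν) (k : ℕ) (α : ℂ) (hα : α.re = 1 / 2 - ν)
    (r : ℝ) (hr : 0 < r) (φ : ℝ → ℂ) (hφmeas : Measurable φ)
    (Mφ : ℝ) (hφbd : ∀ y : ℝ, ‖φ y‖ ≤ Mφ) (hφvanish : ∀ y : ℝ, r < y → φ y = 0)
    (δ : ℝ) (hδ0 : 0 < δ) (hδ1 : δ < 1) :
    ∃ c > (0 : ℝ), ∀ f : ℝ → ℂ, Measurable f →
      IntegrableOn (fun y => ‖f y‖ ^ 2) (Set.Ioi 0) →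
      ∀ x : ℝ, 0 < x → x ≤ δ →
        ‖∫ y in Set.Ioi x, Complex.exp (-α * (Real.log (x / y) : ℂ)) *
            ((y ^ (ν - 1) : ℝ) : ℂ) * (((Real.log (x / y)) ^ k : ℝ) : ℂ) * φ y * f y‖
          ≤ Mφ * x ^ (ν - 1 / 2) *
            (|Real.log x| ^ ((k : ℝ) + 1 / 2) *
                (∫ y in Set.Ioc (0 : ℝ) δ, ‖f y‖ ^ 2) ^ ((1 : ℝ) / 2)
              + c * |Real.log x| ^ (k : ℕ) *
                (∫ y in Set.Ioi (0 : ℝ), ‖f y‖ ^ 2) ^ ((1 : ℝ) / 2)) := by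
  have hMφ : 0 ≤ Mφ := le_trans (norm_nonneg _) (hφbd 0)
  set R : ℝ := max δ r with hRdef
  have hδR : δ ≤ R := le_max_left _ _
  have hrR : r ≤ R := le_max_right _ _
  have hR0 : 0 < R := lt_of_lt_of_le hδ0 hδR
  have hL : 0 < -Real.log δ := by have := Real.log_neg hδ0 hδ1; linarith
  set C₁ : ℝ := max (Real.log R) 0 / (-Real.log δ) + 1 with hC₁def
  have hC₁ : 1 ≤ C₁ := by
    have h0 : 0 ≤ max (Real.log R) 0 / (-Real.log δ) := div_nonneg (le_max_right _ _) hL.le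
    rw [hC₁def]; linarith
  set q : ℝ := δ ^ (-(1 / 2) : ℝ) * C₁ ^ k * (R - δ) ^ ((1 : ℝ) / 2) with hqdef
  have hq0 : 0 ≤ q :=
    mul_nonneg (mul_nonneg (Real.rpow_nonneg hδ0.le _) (pow_nonneg (by linarith) _))
      (Real.rpow_nonneg (by linarith) _)
  refine ⟨q + 1, by linarith, ?_⟩
  intro f hfmeas hf2 x hx0 hxδ
  set g : ℝ → ℂ := fun y => Complex.exp (-α * (Real.log (x / y) : ℂ)) *
      ((y ^ (ν - 1) : ℝ) : ℂ) * (((Real.log (x / y)) ^ k : ℝ) : ℂ) * φ y * f y with hgdef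
  have hx1 : x < 1 := lt_of_le_of_lt hxδ hδ1
  have hlx : Real.log x < 0 := Real.log_neg hx0 hx1
  have habs : |Real.log x| = -Real.log x := abs_of_neg hlx
  have hLx : -Real.log δ ≤ -Real.log x := by
    have := Real.log_le_log hx0 hxδ; linarith
  have hXnn : 0 ≤ x ^ (ν - 1 / 2) := Real.rpow_nonneg hx0.le _
  -- measurability
  have m1 : Measurable fun y : ℝ => Real.log (x / y) :=
    Real.measurable_log.comp (measurable_const.div measurable_id)
  have hgmeas : Measurable g := by
    exact ((((Complex.measurable_exp.comp
      ((Complex.measurable_ofReal.comp m1).const_mul (-α))).mul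
      (Complex.measurable_ofReal.comp (measurable_id'.pow_const (ν - 1)))).mul
      (Complex.measurable_ofReal.comp (m1.pow_const k))).mul hφmeas).mul hfmeas
  -- pointwise norm identity
  have hgE : ∀ y : ℝ, x < y → ‖g y‖ =
      x ^ (ν - 1 / 2) * y ^ (-(1 / 2) : ℝ) * (Real.log y - Real.log x) ^ k * ‖φ y‖ * ‖f y‖ := by
    intro y hy
    have hy0 : 0 < y := hx0.trans hy
    have hld : Real.log (x / y) = Real.log x - Real.log y := Real.log_div hx0.ne' hy0.ne'
    have hlog_le : Real.log x ≤ Real.log y := Real.log_le_log hx0 hy.le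
    have hre : (-α * ((Real.log (x / y)) : ℂ)).re = -α.re * Real.log (x / y) := by
      simp [Complex.mul_re]
    have e1 : ‖Complex.exp (-α * ((Real.log (x / y)) : ℂ))‖
        = x ^ (ν - 1 / 2) * y ^ ((1 : ℝ) / 2 - ν) := by
      rw [Complex.norm_exp, hre, hα, hld,
        Real.rpow_def_of_pos hx0, Real.rpow_def_of_pos hy0, ← Real.exp_add]
      exact congrArg Real.exp (by ring)
    have e2 : ‖(((Real.log (x / y)) ^ k : ℝ) : ℂ)‖ = (Real.log y - Real.log x) ^ k := by
      rw [Complex.norm_real, Real.norm_eq_abs, abs_pow, hld, abs_sub_comm,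
        abs_of_nonneg (by linarith)]
    have e3 : ‖((y ^ (ν - 1) : ℝ) : ℂ)‖ = y ^ (ν - 1) := by
      rw [Complex.norm_real, Real.norm_eq_abs, abs_of_nonneg (Real.rpow_nonneg hy0.le _)]
    have e4 : y ^ ((1 : ℝ) / 2 - ν) * y ^ (ν - 1) = y ^ (-(1 / 2) : ℝ) := by
      rw [← Real.rpow_add hy0]; congr 1; ring
    simp only [hgdef]
    rw [norm_mul, norm_mul, norm_mul, norm_mul, e1, e2, e3,
      mul_assoc (x ^ (ν - 1 / 2)) (y ^ ((1 : ℝ) / 2 - ν)) (y ^ (ν - 1)), e4]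
  -- integrability of pieces
  have hsub1 : Set.Ioc x δ ⊆ Set.Ioi (0 : ℝ) := fun y hy => hx0.trans hy.1
  have hsub2 : Set.Ioc δ R ⊆ Set.Ioi (0 : ℝ) := fun y hy => hδ0.trans hy.1
  have hf2_1 : IntegrableOn (fun y => ‖f y‖ ^ 2) (Set.Ioc x δ) := hf2.mono_set hsub1
  have hf2_2 : IntegrableOn (fun y => ‖f y‖ ^ 2) (Set.Ioc δ R) := hf2.mono_set hsub2
  have humeas : Measurable fun y : ℝ => y ^ (-(1 / 2) : ℝ) := measurable_id'.pow_const _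
  have hvmeas : Measurable fun y : ℝ => ‖f y‖ := hfmeas.norm
  have huinv : ∀ y : ℝ, 0 < y → (y ^ (-(1 / 2) : ℝ)) ^ 2 = y⁻¹ := by
    intro y hy
    rw [← Real.rpow_natCast (y ^ (-(1 / 2) : ℝ)) 2, ← Real.rpow_mul hy.le,
      show (-(1 / 2) : ℝ) * ((2 : ℕ) : ℝ) = -1 by norm_num, Real.rpow_neg_one]
  have hu2_1 : IntegrableOn (fun y : ℝ => (y ^ (-(1 / 2) : ℝ)) ^ 2) (Set.Ioc x δ) := by
    have hinv : IntegrableOn (fun y : ℝ => y⁻¹) (Set.Icc x δ) := by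
      apply ContinuousOn.integrableOn_Icc
      exact continuousOn_inv₀.mono fun y hy =>
        Set.mem_compl_singleton_iff.2 (lt_of_lt_of_le hx0 hy.1).ne'
    exact (hinv.mono_set Set.Ioc_subset_Icc_self).congr_fun
      (fun y hy => (huinv y (hx0.trans hy.1)).symm) measurableSet_Ioc
  set CA : ℝ := Mφ * x ^ (ν - 1 / 2) * (-Real.log x) ^ k with hCAdef
  have hCAnn : 0 ≤ CA := mul_nonneg (mul_nonneg hMφ hXnn) (pow_nonneg (by linarith) _)
  have hmul1 : IntegrableOn (fun y : ℝ => y ^ (-(1 / 2) : ℝ) * ‖f y‖) (Set.Ioc x δ) :=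
    stmt7_mul_int humeas hvmeas hu2_1 hf2_1
  have hbound1 : ∀ y ∈ Set.Ioc x δ, ‖g y‖ ≤ CA * (y ^ (-(1 / 2) : ℝ) * ‖f y‖) := by
    intro y hy
    have hyx : x < y := hy.1
    have hy0 : 0 < y := hx0.trans hyx
    rw [hgE y hyx]
    have h1 : (Real.log y - Real.log x) ^ k ≤ (-Real.log x) ^ k := by
      apply pow_le_pow_left₀ (sub_nonneg.2 (Real.log_le_log hx0 hyx.le))
      have : Real.log y ≤ 0 := Real.log_nonpos hy0.le (le_trans hy.2 hδ1.le)
      linarith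
    have hy' : 0 ≤ y ^ (-(1 / 2) : ℝ) := Real.rpow_nonneg hy0.le _
    calc x ^ (ν - 1 / 2) * y ^ (-(1 / 2) : ℝ) * (Real.log y - Real.log x) ^ k * ‖φ y‖ * ‖f y‖
        = (x ^ (ν - 1 / 2) * (y ^ (-(1 / 2) : ℝ) * ‖f y‖)) *
            ((Real.log y - Real.log x) ^ k * ‖φ y‖) := by ring
      _ ≤ (x ^ (ν - 1 / 2) * (y ^ (-(1 / 2) : ℝ) * ‖f y‖)) * ((-Real.log x) ^ k * Mφ) := by
          refine mul_le_mul_of_nonneg_left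
            (mul_le_mul h1 (hφbd y) (norm_nonneg _) (pow_nonneg (by linarith) _))
            (mul_nonneg hXnn (mul_nonneg hy' (norm_nonneg _)))
      _ = CA * (y ^ (-(1 / 2) : ℝ) * ‖f y‖) := by rw [hCAdef]; ring
  have hint1 : IntegrableOn (fun y => ‖g y‖) (Set.Ioc x δ) := by
    refine Integrable.mono' (hmul1.const_mul CA) (hgmeas.norm.aestronglyMeasurable) ?_
    refine (ae_restrict_iff' measurableSet_Ioc).2 (ae_of_all _ fun y hy => ?_)
    rw [norm_norm]
    exact hbound1 y hy
  set I₁ : ℝ := ∫ y in Set.Ioc (0 : ℝ) δ, ‖f y‖ ^ 2 with hI₁def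
  set I₂ : ℝ := ∫ y in Set.Ioi (0 : ℝ), ‖f y‖ ^ 2 with hI₂def
  have hI₁nn : 0 ≤ I₁ := setIntegral_nonneg measurableSet_Ioc fun y _ => sq_nonneg _
  have hI₂nn : 0 ≤ I₂ := setIntegral_nonneg measurableSet_Ioi fun y _ => sq_nonneg _
  have hA : ∫ y in Set.Ioc x δ, ‖g y‖
      ≤ CA * ((-Real.log x) ^ ((1 : ℝ) / 2) * I₁ ^ ((1 : ℝ) / 2)) := by
    have step1 : ∫ y in Set.Ioc x δ, ‖g y‖
        ≤ ∫ y in Set.Ioc x δ, CA * (y ^ (-(1 / 2) : ℝ) * ‖f y‖) :=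
      setIntegral_mono_on hint1 (hmul1.const_mul CA) measurableSet_Ioc hbound1
    have step2 : ∫ y in Set.Ioc x δ, CA * (y ^ (-(1 / 2) : ℝ) * ‖f y‖)
        = CA * ∫ y in Set.Ioc x δ, y ^ (-(1 / 2) : ℝ) * ‖f y‖ := integral_const_mul _ _
    have step3 := stmt7_cs measurableSet_Ioc humeas hvmeas
      (fun y hy => Real.rpow_nonneg (hx0.trans hy.1).le _) (fun y _ => norm_nonneg _)
      hu2_1 hf2_1
    have hiv : ∫ y in Set.Ioc x δ, (y ^ (-(1 / 2) : ℝ)) ^ 2 = Real.log δ - Real.log x := by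
      rw [setIntegral_congr_fun measurableSet_Ioc
        (g := fun y : ℝ => y⁻¹) (fun y hy => huinv y (hx0.trans hy.1)),
        ← intervalIntegral.integral_of_le hxδ, integral_inv, Real.log_div hδ0.ne' hx0.ne']
      rw [Set.uIcc_of_le hxδ]
      exact fun h => absurd h.1 (not_le.2 hx0)
    have h12 : (∫ y in Set.Ioc x δ, (y ^ (-(1 / 2) : ℝ)) ^ 2) ^ ((1 : ℝ) / 2)
        ≤ (-Real.log x) ^ ((1 : ℝ) / 2) := by
      rw [hiv]
      have h1 : Real.log x ≤ Real.log δ := Real.log_le_log hx0 hxδ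
      have h2 : Real.log δ ≤ 0 := Real.log_nonpos hδ0.le hδ1.le
      exact Real.rpow_le_rpow (by linarith) (by linarith) (by norm_num)
    have h22 : (∫ y in Set.Ioc x δ, ‖f y‖ ^ 2) ^ ((1 : ℝ) / 2) ≤ I₁ ^ ((1 : ℝ) / 2) := by
      refine Real.rpow_le_rpow (setIntegral_nonneg measurableSet_Ioc fun y _ => sq_nonneg _)
        ?_ (by norm_num)
      exact setIntegral_mono_set (hf2.mono_set fun y hy => hy.1)
        (ae_of_all _ fun y => sq_nonneg _)
        (HasSubset.Subset.eventuallyLE (Set.Ioc_subset_Ioc_left hx0.le))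
    calc ∫ y in Set.Ioc x δ, ‖g y‖
        ≤ CA * ∫ y in Set.Ioc x δ, y ^ (-(1 / 2) : ℝ) * ‖f y‖ := step1.trans_eq step2
      _ ≤ CA * ((∫ y in Set.Ioc x δ, (y ^ (-(1 / 2) : ℝ)) ^ 2) ^ ((1 : ℝ) / 2) *
            (∫ y in Set.Ioc x δ, ‖f y‖ ^ 2) ^ ((1 : ℝ) / 2)) :=
          mul_le_mul_of_nonneg_left step3 hCAnn
      _ ≤ CA * ((-Real.log x) ^ ((1 : ℝ) / 2) * I₁ ^ ((1 : ℝ) / 2)) := by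
          refine mul_le_mul_of_nonneg_left
            (mul_le_mul h12 h22 (Real.rpow_nonneg
              (setIntegral_nonneg measurableSet_Ioc fun y _ => sq_nonneg _) _)
              (Real.rpow_nonneg (by linarith) _)) hCAnn
  -- the middle piece
  set CB : ℝ := Mφ * x ^ (ν - 1 / 2) * δ ^ (-(1 / 2) : ℝ) * (C₁ * (-Real.log x)) ^ k with hCBdef
  have hCBnn : 0 ≤ CB :=
    mul_nonneg (mul_nonneg (mul_nonneg hMφ hXnn) (Real.rpow_nonneg hδ0.le _))
      (pow_nonneg (mul_nonneg (by linarith) (by linarith)) _)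
  have hbound2 : ∀ y ∈ Set.Ioc δ R, ‖g y‖ ≤ CB * ‖f y‖ := by
    intro y hy
    have hδy : δ < y := hy.1
    have hy0 : 0 < y := hδ0.trans hδy
    have hxy : x < y := lt_of_le_of_lt hxδ hδy
    rw [hgE y hxy]
    have h1 : y ^ (-(1 / 2) : ℝ) ≤ δ ^ (-(1 / 2) : ℝ) :=
      Real.rpow_le_rpow_of_nonpos hδ0 hδy.le (by norm_num)
    have h2 : (Real.log y - Real.log x) ^ k ≤ (C₁ * (-Real.log x)) ^ k := by
      apply pow_le_pow_left₀ (sub_nonneg.2 (Real.log_le_log hx0 hxy.le))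
      have hyR : Real.log y ≤ max (Real.log R) 0 :=
        le_trans (Real.log_le_log hy0 hy.2) (le_max_left _ _)
      have hd : 0 ≤ max (Real.log R) 0 / (-Real.log δ) := div_nonneg (le_max_right _ _) hL.le
      have h3 : max (Real.log R) 0 ≤ max (Real.log R) 0 / (-Real.log δ) * (-Real.log x) := by
        calc max (Real.log R) 0 = max (Real.log R) 0 / (-Real.log δ) * (-Real.log δ) :=
              (div_mul_cancel₀ _ hL.ne').symm
          _ ≤ max (Real.log R) 0 / (-Real.log δ) * (-Real.log x) :=
              mul_le_mul_of_nonneg_left hLx hd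
      rw [hC₁def, add_mul, one_mul]
      linarith
    have hy' : 0 ≤ y ^ (-(1 / 2) : ℝ) := Real.rpow_nonneg hy0.le _
    have hLk : 0 ≤ (Real.log y - Real.log x) ^ k :=
      pow_nonneg (sub_nonneg.2 (Real.log_le_log hx0 hxy.le)) _
    calc x ^ (ν - 1 / 2) * y ^ (-(1 / 2) : ℝ) * (Real.log y - Real.log x) ^ k * ‖φ y‖ * ‖f y‖
        = (x ^ (ν - 1 / 2) * ‖f y‖) *
            (y ^ (-(1 / 2) : ℝ) * ((Real.log y - Real.log x) ^ k * ‖φ y‖)) := by ring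
      _ ≤ (x ^ (ν - 1 / 2) * ‖f y‖) *
            (δ ^ (-(1 / 2) : ℝ) * ((C₁ * (-Real.log x)) ^ k * Mφ)) := by
          refine mul_le_mul_of_nonneg_left
            (mul_le_mul h1 (mul_le_mul h2 (hφbd y) (norm_nonneg _)
              (pow_nonneg (mul_nonneg (by linarith) (by linarith)) _))
              (mul_nonneg hLk (norm_nonneg _)) (Real.rpow_nonneg hδ0.le _))
            (mul_nonneg hXnn (norm_nonneg _))
      _ = CB * ‖f y‖ := by rw [hCBdef]; ring
  have hone2 : IntegrableOn (fun _ : ℝ => (1 : ℝ) ^ 2) (Set.Ioc δ R) := by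
    have : IntegrableOn (fun _ : ℝ => (1 : ℝ)) (Set.Ioc δ R) :=
      integrableOn_const measure_Ioc_lt_top.ne
    simpa using this
  have hnor : IntegrableOn (fun y : ℝ => ‖f y‖) (Set.Ioc δ R) := by
    have := stmt7_mul_int (measurable_const (a := (1 : ℝ))) hvmeas hone2 hf2_2
    simpa using this
  have hint2 : IntegrableOn (fun y => ‖g y‖) (Set.Ioc δ R) := by
    refine Integrable.mono' (hnor.const_mul CB) (hgmeas.norm.aestronglyMeasurable) ?_
    refine (ae_restrict_iff' measurableSet_Ioc).2 (ae_of_all _ fun y hy => ?_)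
    rw [norm_norm]
    exact hbound2 y hy
  have hB : ∫ y in Set.Ioc δ R, ‖g y‖
      ≤ CB * ((R - δ) ^ ((1 : ℝ) / 2) * I₂ ^ ((1 : ℝ) / 2)) := by
    have step1 : ∫ y in Set.Ioc δ R, ‖g y‖ ≤ ∫ y in Set.Ioc δ R, CB * ‖f y‖ :=
      setIntegral_mono_on hint2 (hnor.const_mul CB) measurableSet_Ioc hbound2
    have step2 : ∫ y in Set.Ioc δ R, CB * ‖f y‖ = CB * ∫ y in Set.Ioc δ R, ‖f y‖ :=
      integral_const_mul _ _
    have step3 := stmt7_cs measurableSet_Ioc (measurable_const (a := (1 : ℝ))) hvmeas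
      (fun y _ => zero_le_one) (fun y _ => norm_nonneg _) hone2 hf2_2
    have hone : ∫ y in Set.Ioc δ R, (1 : ℝ) ^ 2 = R - δ := by
      simp [Real.volume_Ioc, ENNReal.toReal_ofReal (by linarith : (0 : ℝ) ≤ R - δ), hδR]
    have h22 : (∫ y in Set.Ioc δ R, ‖f y‖ ^ 2) ^ ((1 : ℝ) / 2) ≤ I₂ ^ ((1 : ℝ) / 2) := by
      refine Real.rpow_le_rpow (setIntegral_nonneg measurableSet_Ioc fun y _ => sq_nonneg _)
        ?_ (by norm_num)
      exact setIntegral_mono_set hf2 (ae_of_all _ fun y => sq_nonneg _)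
        (HasSubset.Subset.eventuallyLE hsub2)
    calc ∫ y in Set.Ioc δ R, ‖g y‖
        ≤ CB * ∫ y in Set.Ioc δ R, ‖f y‖ := step1.trans_eq step2
      _ = CB * ∫ y in Set.Ioc δ R, (1 : ℝ) * ‖f y‖ := by simp
      _ ≤ CB * ((∫ y in Set.Ioc δ R, (1 : ℝ) ^ 2) ^ ((1 : ℝ) / 2) *
            (∫ y in Set.Ioc δ R, ‖f y‖ ^ 2) ^ ((1 : ℝ) / 2)) :=
          mul_le_mul_of_nonneg_left step3 hCBnn
      _ ≤ CB * ((R - δ) ^ ((1 : ℝ) / 2) * I₂ ^ ((1 : ℝ) / 2)) := by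
          rw [hone]
          exact mul_le_mul_of_nonneg_left
            (mul_le_mul_of_nonneg_left h22 (Real.rpow_nonneg (by linarith) _)) hCBnn
  -- the vanishing tail
  have hzero : ∀ y ∈ Set.Ioi R, g y = 0 := by
    intro y hy
    have : φ y = 0 := hφvanish y (lt_of_le_of_lt hrR hy)
    simp [hgdef, this]
  have hint3 : IntegrableOn (fun y => ‖g y‖) (Set.Ioi R) :=
    IntegrableOn.congr_fun (integrableOn_zero)
      (fun y hy => by rw [hzero y hy]; simp) measurableSet_Ioi
  have hzero' : ∫ y in Set.Ioi R, ‖g y‖ = 0 := by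
    rw [setIntegral_congr_fun measurableSet_Ioi
      (g := fun _ : ℝ => (0 : ℝ)) (fun y hy => by rw [hzero y hy]; simp), integral_zero]
  -- splitting
  have hsplit2set : Set.Ioc δ R ∪ Set.Ioi R = Set.Ioi δ := Set.Ioc_union_Ioi_eq_Ioi hδR
  have hint23 : IntegrableOn (fun y => ‖g y‖) (Set.Ioi δ) := by
    rw [← hsplit2set]; exact hint2.union hint3
  have hsplit1 : ∫ y in Set.Ioi x, ‖g y‖
      = (∫ y in Set.Ioc x δ, ‖g y‖) + ∫ y in Set.Ioi δ, ‖g y‖ := by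
    rw [← Set.Ioc_union_Ioi_eq_Ioi hxδ]
    exact setIntegral_union (Set.Ioc_disjoint_Ioi le_rfl) measurableSet_Ioi hint1 hint23
  have hsplit2 : ∫ y in Set.Ioi δ, ‖g y‖
      = (∫ y in Set.Ioc δ R, ‖g y‖) + ∫ y in Set.Ioi R, ‖g y‖ := by
    rw [← hsplit2set]
    exact setIntegral_union (Set.Ioc_disjoint_Ioi le_rfl) measurableSet_Ioi hint2 hint3
  have hnormle : ‖∫ y in Set.Ioi x, g y‖ ≤ ∫ y in Set.Ioi x, ‖g y‖ :=
    norm_integral_le_integral_norm _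
  -- final assembly
  have hpow : |Real.log x| ^ ((k : ℝ) + 1 / 2)
      = (-Real.log x) ^ k * (-Real.log x) ^ ((1 : ℝ) / 2) := by
    rw [habs, Real.rpow_add (by linarith : (0 : ℝ) < -Real.log x), Real.rpow_natCast]
  have key1 : ∫ y in Set.Ioc x δ, ‖g y‖
      ≤ Mφ * x ^ (ν - 1 / 2) * (|Real.log x| ^ ((k : ℝ) + 1 / 2) * I₁ ^ ((1 : ℝ) / 2)) := by
    refine hA.trans (le_of_eq ?_)
    rw [hpow, hCAdef]; ring
  have key2 : ∫ y in Set.Ioc δ R, ‖g y‖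
      ≤ Mφ * x ^ (ν - 1 / 2) * ((q + 1) * |Real.log x| ^ (k : ℕ) * I₂ ^ ((1 : ℝ) / 2)) := by
    refine hB.trans ?_
    have hT : 0 ≤ (-Real.log x) ^ k * I₂ ^ ((1 : ℝ) / 2) :=
      mul_nonneg (pow_nonneg (by linarith) _) (Real.rpow_nonneg hI₂nn _)
    have heq : CB * ((R - δ) ^ ((1 : ℝ) / 2) * I₂ ^ ((1 : ℝ) / 2))
        = Mφ * x ^ (ν - 1 / 2) * (q * ((-Real.log x) ^ k * I₂ ^ ((1 : ℝ) / 2))) := by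
      rw [hCBdef, hqdef, mul_pow]; ring
    rw [heq, habs]
    have := mul_le_mul_of_nonneg_left
      (mul_le_mul_of_nonneg_right (by linarith : q ≤ q + 1) hT)
      (mul_nonneg hMφ hXnn)
    calc Mφ * x ^ (ν - 1 / 2) * (q * ((-Real.log x) ^ k * I₂ ^ ((1 : ℝ) / 2)))
        ≤ Mφ * x ^ (ν - 1 / 2) * ((q + 1) * ((-Real.log x) ^ k * I₂ ^ ((1 : ℝ) / 2))) := this
      _ = Mφ * x ^ (ν - 1 / 2) * ((q + 1) * (-Real.log x) ^ k * I₂ ^ ((1 : ℝ) / 2)) := by ring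
  calc ‖∫ y in Set.Ioi x, g y‖ ≤ ∫ y in Set.Ioi x, ‖g y‖ := hnormle
    _ = (∫ y in Set.Ioc x δ, ‖g y‖) + ((∫ y in Set.Ioc δ R, ‖g y‖) + 0) := by
        rw [hsplit1, hsplit2, hzero']
    _ ≤ Mφ * x ^ (ν - 1 / 2) * (|Real.log x| ^ ((k : ℝ) + 1 / 2) * I₁ ^ ((1 : ℝ) / 2))
        + Mφ * x ^ (ν - 1 / 2) * ((q + 1) * |Real.log x| ^ (k : ℕ) * I₂ ^ ((1 : ℝ) / 2)) := by
        linarith [key1, key2]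
    _ = Mφ * x ^ (ν - 1 / 2) *
        (|Real.log x| ^ ((k : ℝ) + 1 / 2) * I₁ ^ ((1 : ℝ) / 2)
          + (q + 1) * |Real.log x| ^ (k : ℕ) * I₂ ^ ((1 : ℝ) / 2)) := by ring
end

section
/- Let λ ∈ ℝ and let f : [0,∞) → ℂ be continuously differentiable with both f and f′ square-integrable on (0,∞). Then λ² ∫₀^∞ |f(x)|² dx ≤ ∫₀^∞ |f′(x) + λ f(x)|² dx + λ |f(0)|². -/
open MeasureTheory Filter

/-- An eventually-nonneg integrable function on `Ioi 0` with a limit at infinity has limit 0. -/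
lemma limit_zero_of_integrable {g : ℝ → ℝ} (hint : IntegrableOn g (Set.Ioi 0))
    (hnn : ∀ x, 0 ≤ g x) {L : ℝ} (hlim : Tendsto g atTop (nhds L)) : L = 0 := by
  by_contra hL
  have hL0 : 0 ≤ L := le_of_tendsto_of_tendsto' tendsto_const_nhds hlim (fun x => hnn x)
  have hLpos : 0 < L := lt_of_le_of_ne hL0 (Ne.symm hL)
  obtain ⟨T, hT⟩ := (hlim.eventually (eventually_ge_nhds (show L/2 < L by linarith))).exists_forall_of_atTop
  set T' := max T 1 with hT'
  have hsub : Set.Ioi T' ⊆ Set.Ioi (0:ℝ) := Set.Ioi_subset_Ioi (le_trans zero_le_one (le_max_right _ _))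
  have hconst : IntegrableOn (fun _ : ℝ => L/2) (Set.Ioi T') := by
    apply Integrable.mono' (hint.mono_set hsub) aestronglyMeasurable_const
    filter_upwards [ae_restrict_mem measurableSet_Ioi] with x hx
    have := hT x (le_trans (le_max_left _ _) (le_of_lt hx))
    rw [Real.norm_eq_abs, abs_of_nonneg (by linarith)]
    exact this
  rw [integrableOn_const_iff] at hconst
  rcases hconst with h | h
  · simp at h; linarith
  · simp [Real.volume_Ioi] at h

/-- Lemma S1A1 (1): for `f : [0,∞) → ℂ` continuously differentiable with `f, f' ∈ L²`,
`λ² ∫₀^∞ |f|² ≤ ∫₀^∞ |f' + λf|² + λ|f(0)|²`. -/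
theorem stmt8 (lam : ℝ) (f f' : ℝ → ℂ)
    (hderiv : ∀ x ∈ Set.Ici (0 : ℝ), HasDerivWithinAt f (f' x) (Set.Ici 0) x)
    (hcont : ContinuousOn f' (Set.Ici 0))
    (hfL2 : IntegrableOn (fun x => ‖f x‖ ^ 2) (Set.Ioi 0))
    (hf'L2 : IntegrableOn (fun x => ‖f' x‖ ^ 2) (Set.Ioi 0)) :
    lam ^ 2 * ∫ x in Set.Ioi (0 : ℝ), ‖f x‖ ^ 2
      ≤ (∫ x in Set.Ioi (0 : ℝ), ‖f' x + (lam : ℂ) * f x‖ ^ 2) + lam * ‖f 0‖ ^ 2 := by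
  set g' : ℝ → ℝ := fun x => 2 * ((f' x) * (starRingEnd ℂ) (f x)).re with hg'def
  have hfc : ContinuousOn f (Set.Ici 0) := fun x hx => (hderiv x hx).continuousWithinAt
  -- derivative of ‖f‖²
  have hg : ∀ x ∈ Set.Ici (0:ℝ), HasDerivWithinAt (fun x => ‖f x‖^2) (g' x) (Set.Ici 0) x := by
    intro x hx
    have h1 := ((hderiv x hx).mul (hderiv x hx).star)
    have h2 := (Complex.reCLM.hasFDerivAt.comp_hasDerivWithinAt x h1)
    have hfun : (fun x => ‖f x‖^2) = fun x => Complex.reCLM (f x * star (f x)) := by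
      funext y
      simp [Complex.mul_conj, ← Complex.normSq_eq_norm_sq]
    rw [hfun]
    refine h2.congr_deriv ?_
    simp [hg'def, Complex.add_re, Complex.mul_re, Complex.conj_re, Complex.conj_im]
    ring
  have hg'cont : ContinuousOn g' (Set.Ici 0) := by
    apply continuousOn_const.mul
    exact Complex.continuous_re.comp_continuousOn
      (hcont.mul ((Complex.continuous_conj.comp_continuousOn hfc)))
  have hg'int : IntegrableOn g' (Set.Ioi 0) := by
    apply Integrable.mono' (hf'L2.add hfL2)
      ((hg'cont.mono (Set.Ioi_subset_Ici le_rfl)).aestronglyMeasurable measurableSet_Ioi)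
    filter_upwards [ae_restrict_mem measurableSet_Ioi] with x hx
    have h1 : |((f' x) * (starRingEnd ℂ) (f x)).re| ≤ ‖f' x‖ * ‖f x‖ := by
      calc |((f' x) * (starRingEnd ℂ) (f x)).re| ≤ ‖(f' x) * (starRingEnd ℂ) (f x)‖ :=
            Complex.abs_re_le_norm _
        _ = ‖f' x‖ * ‖f x‖ := by
            simp [norm_mul]
    rw [Real.norm_eq_abs, hg'def]
    have h2 : |2 * ((f' x) * (starRingEnd ℂ) (f x)).re| = 2 * |((f' x) * (starRingEnd ℂ) (f x)).re| := by
      rw [abs_mul]; norm_num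
    rw [h2]
    simp only [Pi.add_apply]
    nlinarith [sq_nonneg (‖f' x‖ - ‖f x‖), norm_nonneg (f x), norm_nonneg (f' x)]
  -- FTC
  have key : ∀ T, 0 ≤ T → ∫ x in (0:ℝ)..T, g' x = ‖f T‖^2 - ‖f 0‖^2 := by
    intro T hT
    apply intervalIntegral.integral_eq_sub_of_hasDeriv_right_of_le hT
    · exact ((hfc.mono (Set.Icc_subset_Ici_self)).norm).pow 2
    · intro x hx
      exact (hg x (le_of_lt hx.1)).mono (Set.Ioi_subset_Ici (le_of_lt hx.1))
    · apply ContinuousOn.intervalIntegrable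
      exact hg'cont.mono (by rw [Set.uIcc_of_le hT]; exact Set.Icc_subset_Ici_self)
  have hlim : Tendsto (fun T => ‖f T‖^2) atTop (nhds (‖f 0‖^2 + ∫ x in Set.Ioi 0, g' x)) := by
    have h1 := intervalIntegral_tendsto_integral_Ioi 0 hg'int tendsto_id
    have h2 : (fun T => ‖f 0‖^2 + ∫ x in (0:ℝ)..T, g' x) =ᶠ[atTop] fun T => ‖f T‖^2 := by
      filter_upwards [eventually_ge_atTop (0:ℝ)] with T hT
      rw [key T hT]; ring
    exact Tendsto.congr' h2 (tendsto_const_nhds.add h1)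
  have hL : ‖f 0‖^2 + ∫ x in Set.Ioi 0, g' x = 0 :=
    limit_zero_of_integrable hfL2 (fun x => by positivity) hlim
  have hgint_val : ∫ x in Set.Ioi 0, g' x = -‖f 0‖^2 := by linarith
  -- pointwise identity
  have hpt : ∀ x, ‖f' x + (lam : ℂ) * f x‖^2 = ‖f' x‖^2 + lam^2 * ‖f x‖^2 + lam * g' x := by
    intro x
    have : ∀ z : ℂ, ‖z‖^2 = z.re^2 + z.im^2 := by
      intro z
      rw [Complex.sq_norm, Complex.normSq_apply]; ring
    simp only [this, hg'def, Complex.add_re, Complex.add_im, Complex.mul_re, Complex.mul_im,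
      Complex.ofReal_re, Complex.ofReal_im, Complex.conj_re, Complex.conj_im]
    ring
  have hsplit : ∫ x in Set.Ioi (0:ℝ), ‖f' x + (lam : ℂ) * f x‖^2
      = (∫ x in Set.Ioi (0:ℝ), ‖f' x‖^2) + lam^2 * (∫ x in Set.Ioi (0:ℝ), ‖f x‖^2)
        + lam * (∫ x in Set.Ioi (0:ℝ), g' x) := by
    calc ∫ x in Set.Ioi (0:ℝ), ‖f' x + (lam : ℂ) * f x‖^2
        = ∫ x in Set.Ioi (0:ℝ), (‖f' x‖^2 + lam^2 * ‖f x‖^2 + lam * g' x) :=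
          integral_congr_ae (Eventually.of_forall (fun x => hpt x))
      _ = _ := by
          have h12 : IntegrableOn (fun x => ‖f' x‖^2 + lam^2 * ‖f x‖^2) (Set.Ioi 0) :=
            hf'L2.add (hfL2.const_mul _)
          rw [integral_add h12 (hg'int.const_mul _),
            integral_add hf'L2 (hfL2.const_mul _), integral_const_mul, integral_const_mul]
  have hB : 0 ≤ ∫ x in Set.Ioi (0:ℝ), ‖f' x‖^2 := integral_nonneg (fun x => by positivity)
  rw [hsplit, hgint_val]
  linarith
end

section
/- Let (X, μ) be a measure space, n ∈ ℕ, and let φ₁, …, φ_n ∈ L²(X, μ; ℂ) be orthonormal. Let ρ : X → [0,∞) be square-integrable and C > 0. Assume that for every c = (c₁, …, c_n) ∈ ℂⁿ the inequality |Σ_{j=1}^n c_j φ_j(x)| ≤ C ρ(x) (Σ_{j=1}^n |c_j|²)^{1/2} holds for μ-almost every x ∈ X. Then n ≤ C² ∫_X ρ(x)² dμ(x). -/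
open MeasureTheory

/-- Eigenvalue-counting estimate: if `φ₁, …, φ_n ∈ L²(X,μ)` are orthonormal, `ρ ≥ 0` is
square-integrable and for every `c ∈ ℂⁿ` one has
`|Σ c_j φ_j(x)| ≤ C ρ(x) (Σ |c_j|²)^{1/2}` a.e., then `n ≤ C² ∫ ρ²`. -/
theorem stmt10 {X : Type*} [MeasurableSpace X] (μ : Measure X)
    (n : ℕ) (φ : Fin n → X → ℂ)
    (hL2 : ∀ j, MemLp (φ j) 2 μ)
    (horth : ∀ i j, (∫ x, φ i x * starRingEnd ℂ (φ j x) ∂μ) = if i = j then 1 else 0)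
    (ρ : X → ℝ) (hρ0 : ∀ x, 0 ≤ ρ x)
    (hρ2 : Integrable (fun x => ρ x ^ 2) μ)
    (C : ℝ) (hC : 0 < C)
    (hbound : ∀ c : Fin n → ℂ, ∀ᵐ x ∂μ,
        ‖∑ j, c j * φ j x‖ ≤ C * ρ x * Real.sqrt (∑ j, ‖c j‖ ^ 2)) :
    (n : ℝ) ≤ C ^ 2 * ∫ x, ρ x ^ 2 ∂μ := by
  -- integrability of each ‖φ j‖²
  have hint : ∀ j, Integrable (fun x => ‖φ j x‖ ^ 2) μ := fun j =>
    (memLp_two_iff_integrable_sq_norm (hL2 j).aestronglyMeasurable).mp (hL2 j)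
  -- each has L² norm 1
  have hone : ∀ j, (∫ x, ‖φ j x‖ ^ 2 ∂μ) = 1 := by
    intro j
    have h := horth j j
    simp only [if_pos rfl] at h
    have h2 : (fun x => φ j x * starRingEnd ℂ (φ j x)) =
        fun x => ((‖φ j x‖ ^ 2 : ℝ) : ℂ) := by
      funext x
      rw [RCLike.mul_conj]
      norm_cast
    rw [h2] at h
    rw [show (fun x => ((‖φ j x‖ ^ 2 : ℝ) : ℂ)) =
        fun x => (RCLike.ofReal (‖φ j x‖ ^ 2) : ℂ) from rfl, integral_ofReal] at h
    simp only [if_true] at h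
    rw [show (1 : ℂ) = (RCLike.ofReal (1 : ℝ) : ℂ) by simp] at h
    exact RCLike.ofReal_inj.mp h
  -- countable dense set of coefficients
  obtain ⟨s, hsc, hsd⟩ := TopologicalSpace.exists_countable_dense (Fin n → ℂ)
  have hae : ∀ᵐ x ∂μ, ∀ c ∈ s,
      ‖∑ j, c j * φ j x‖ ≤ C * ρ x * Real.sqrt (∑ j, ‖c j‖ ^ 2) :=
    (ae_ball_iff hsc).mpr fun c _ => hbound c
  -- pointwise bound for all c a.e.
  have hae2 : ∀ᵐ x ∂μ, ∀ c : Fin n → ℂ,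
      ‖∑ j, c j * φ j x‖ ≤ C * ρ x * Real.sqrt (∑ j, ‖c j‖ ^ 2) := by
    filter_upwards [hae] with x hx c
    have hcl : IsClosed {c : Fin n → ℂ |
        ‖∑ j, c j * φ j x‖ ≤ C * ρ x * Real.sqrt (∑ j, ‖c j‖ ^ 2)} := by
      apply isClosed_le
      · exact (continuous_finset_sum _ fun j _ =>
          (continuous_apply j).mul continuous_const).norm
      · exact (continuous_const.mul ((continuous_finset_sum _ fun j _ =>
          ((continuous_apply j).norm.pow 2)).sqrt))
    have : closure s ⊆ {c : Fin n → ℂ |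
        ‖∑ j, c j * φ j x‖ ≤ C * ρ x * Real.sqrt (∑ j, ‖c j‖ ^ 2)} :=
      closure_minimal (fun c hc => hx c hc) hcl
    exact this (by rw [hsd.closure_eq]; trivial)
  -- deduce the key pointwise estimate
  have hkey : ∀ᵐ x ∂μ, (∑ j, ‖φ j x‖ ^ 2) ≤ C ^ 2 * ρ x ^ 2 := by
    filter_upwards [hae2] with x hx
    set S : ℝ := ∑ j, ‖φ j x‖ ^ 2 with hS
    have hS0 : 0 ≤ S := Finset.sum_nonneg fun j _ => sq_nonneg _
    have hb := hx (fun j => starRingEnd ℂ (φ j x))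
    have he1 : (∑ j, starRingEnd ℂ (φ j x) * φ j x) = ((S : ℝ) : ℂ) := by
      rw [hS]
      push_cast
      exact Finset.sum_congr rfl fun j _ => by rw [RCLike.conj_mul]; norm_cast
    have he2 : (∑ j, ‖starRingEnd ℂ (φ j x)‖ ^ 2) = S := by
      simp [hS]
    rw [he1, he2] at hb
    have hnorm : ‖((S : ℝ) : ℂ)‖ = S := by
      rw [Complex.norm_real, Real.norm_of_nonneg hS0]
    rw [hnorm] at hb
    nlinarith [Real.sq_sqrt hS0, Real.sqrt_nonneg S,
      sq_nonneg (Real.sqrt S - C * ρ x), mul_nonneg (mul_nonneg hC.le (hρ0 x)) (Real.sqrt_nonneg S)]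
  -- integrate
  have hSint : Integrable (fun x => ∑ j, ‖φ j x‖ ^ 2) μ :=
    integrable_finset_sum _ fun j _ => hint j
  have hRint : Integrable (fun x => C ^ 2 * ρ x ^ 2) μ := hρ2.const_mul _
  have hmono : (∫ x, ∑ j, ‖φ j x‖ ^ 2 ∂μ) ≤ ∫ x, C ^ 2 * ρ x ^ 2 ∂μ :=
    integral_mono_ae hSint hRint hkey
  rw [integral_finset_sum _ (fun j _ => hint j)] at hmono
  rw [integral_const_mul] at hmono
  simp only [hone, Finset.sum_const, Finset.card_univ, Fintype.card_fin,
    nsmul_eq_mul, mul_one] at hmono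
  exact hmono
end

section
/- Let λ ≥ 0 be a real number, k ≥ 1 an integer, and ε ∈ {i, −i}. Then the polynomial p(z) = (−z² + z + λ)^k − ε ∈ ℂ[z] has degree 2k and exactly 2k distinct complex roots (i.e. p is squarefree, having no repeated roots). -/
/-!
With `q = -z² + z + λ`, the derivative of `q ^ k - ε` is `k q^(k-1) q'`. A common root with
`q ^ k - ε` cannot be a root of `q` (as `ε ≠ 0`), so it is the critical point `z = 1/2` of `q`.
There `q` takes the real value `1/4 + λ`, whose powers are real and hence never equal `±i`.
So `q ^ k - ε` is separable, and over `ℂ` its `2k` roots are distinct.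
-/

open Polynomial

namespace Polynomial

theorem natDegree_pow_sub_C {R : Type*} [Ring R] [NoZeroDivisors R] (q : R[X]) (k : ℕ) (c : R) :
    (q ^ k - C c).natDegree = k * q.natDegree := by
  rw [natDegree_sub_C, natDegree_pow]

variable {K : Type*} [Field K]

theorem separable_pow_sub_C_of_forall_isRoot_derivative [IsAlgClosed K] {q : K[X]} {k : ℕ}
    (hk : (k : K) ≠ 0) {c : K} (hc : c ≠ 0)
    (hcrit : ∀ a, q.derivative.IsRoot a → q.eval a ^ k ≠ c) :
    (q ^ k - C c).Separable := by
  rw [Separable, isCoprime_iff_aeval_ne_zero_of_isAlgClosed (k := K) K]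
  intro a
  by_contra! h
  simp only [aeval_def, eval₂_eq_eval_map, Algebra.algebraMap_self, Polynomial.map_id,
    derivative_sub, derivative_C, sub_zero, derivative_pow, eval_sub, eval_mul, eval_pow,
    eval_C, sub_eq_zero, mul_eq_zero, hk, false_or] at h
  obtain ⟨hroot, hqa | hq'a⟩ := h
  · have hk0 : k ≠ 0 := by rintro rfl; simp at hk
    exact hc (by rw [← hroot, (pow_eq_zero_iff'.mp hqa).1, zero_pow hk0])
  · exact hcrit a hq'a hroot

theorem card_roots_toFinset_of_separable [IsAlgClosed K] [DecidableEq K] {p : K[X]}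
    (hp : p.Separable) :
    p.roots.toFinset.card = p.natDegree := by
  rw [Multiset.toFinset_card_of_nodup (nodup_roots hp), IsAlgClosed.card_roots_eq_natDegree]

theorem natDegree_neg_X_sq_add_X_add_C (μ : K) :
    (-X ^ 2 + X + C μ).natDegree = 2 := by
  compute_degree!

theorem eval_neg_X_sq_add_X_add_C_of_isRoot_derivative (h2 : (2 : K) ≠ 0) {μ a : K}
    (ha : (derivative (-X ^ 2 + X + C μ)).IsRoot a) :
    (-X ^ 2 + X + C μ).eval a = 1 / 4 + μ := by
  have hhalf : a = 1 / 2 := by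
    simp only [IsRoot, derivative_add, derivative_neg, derivative_X_pow, derivative_X,
      derivative_C, Nat.cast_ofNat, eval_zero, eval_add, eval_neg, eval_mul, eval_C, eval_pow,
      eval_X, eval_one] at ha
    field_simp
    linear_combination -ha
  have h4 : (4 : K) ≠ 0 := by
    rw [show (4 : K) = 2 * 2 by norm_num]
    exact mul_ne_zero h2 h2
  subst hhalf
  simp only [eval_add, eval_neg, eval_pow, eval_X, eval_C]
  field_simp
  ring

end Polynomial

theorem Complex.ofReal_pow_ne_of_im_ne_zero (x : ℝ) (k : ℕ) {z : ℂ} (hz : z.im ≠ 0) :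
    (x : ℂ) ^ k ≠ z := by
  rintro rfl
  exact hz (by rw [← Complex.ofReal_pow, Complex.ofReal_im])

theorem stmt13_general (lam : ℝ) (k : ℕ) (hk : 1 ≤ k) (ε : ℂ)
    (hε : ε = Complex.I ∨ ε = -Complex.I) :
    ((-X ^ 2 + X + C (lam : ℂ)) ^ k - C ε).natDegree = 2 * k ∧
    ((-X ^ 2 + X + C (lam : ℂ)) ^ k - C ε).roots.toFinset.card = 2 * k ∧
    Squarefree ((-X ^ 2 + X + C (lam : ℂ)) ^ k - C ε) := by
  have hεim : ε.im ≠ 0 := by rcases hε with rfl | rfl <;> simp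
  have hdeg : ((-X ^ 2 + X + C (lam : ℂ)) ^ k - C ε).natDegree = 2 * k := by
    rw [natDegree_pow_sub_C, natDegree_neg_X_sq_add_X_add_C, mul_comm]
  have hsep : ((-X ^ 2 + X + C (lam : ℂ)) ^ k - C ε).Separable := by
    refine separable_pow_sub_C_of_forall_isRoot_derivative (by exact_mod_cast (by omega : k ≠ 0))
      (fun h ↦ hεim (by simp [h])) fun a ha ↦ ?_
    rw [eval_neg_X_sq_add_X_add_C_of_isRoot_derivative two_ne_zero ha]
    simpa using Complex.ofReal_pow_ne_of_im_ne_zero (1 / 4 + lam) k hεim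
  exact ⟨hdeg, (card_roots_toFinset_of_separable hsep).trans hdeg, hsep.squarefree⟩

/-- The polynomial `(-z² + z + λ)^k - ε`, for real `λ ≥ 0`, `k ≥ 1` and `ε = ±i`,
has degree `2k` and exactly `2k` distinct complex roots (it is squarefree). -/
theorem stmt13 (lam : ℝ) (hlam : 0 ≤ lam) (k : ℕ) (hk : 1 ≤ k) (ε : ℂ)
    (hε : ε = Complex.I ∨ ε = -Complex.I) :
    ((-X ^ 2 + X + C (lam : ℂ)) ^ k - C ε).natDegree = 2 * k ∧
    ((-X ^ 2 + X + C (lam : ℂ)) ^ k - C ε).roots.toFinset.card = 2 * k ∧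
    Squarefree ((-X ^ 2 + X + C (lam : ℂ)) ^ k - C ε) :=
  stmt13_general lam k hk ε hε
end

section
/- Let λ ≥ 0 be real, k ≥ 1 an integer, and ε ∈ {i, −i}. Define the operator L on smooth functions g : (0,∞) → ℂ by (Lg)(x) = −x² g″(x) − 2x g′(x) + λ g(x). If f : (0,∞) → ℂ is smooth, satisfies (L^k f)(x) = ε f(x) for all x > 0, and ∫₀^∞ |f(x)|² dx < ∞, then f ≡ 0. (Hence the deficiency indices of the k-th power of DᵗD + λ on C_c^∞((0,∞)) vanish.) -/
open MeasureTheory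

/-- The operator `L = DᵗD + λ`, `(Lg)(x) = -x²g''(x) - 2xg'(x) + λg(x)`. -/
noncomputable def Lop (lam : ℝ) (g : ℝ → ℂ) : ℝ → ℂ :=
  fun x => -(x : ℂ) ^ 2 * iteratedDeriv 2 g x - 2 * (x : ℂ) * deriv g x + (lam : ℂ) * g x


noncomputable def Aop (c : ℂ) (g : ℝ → ℂ) : ℝ → ℂ :=
  fun t => -(iteratedDeriv 2 g t) + c * g t

lemma one_le_inf : (1 : WithTop ℕ∞) ≤ ((⊤:ℕ∞) : WithTop ℕ∞) := by
  exact_mod_cast (le_top : (1:ℕ∞) ≤ ⊤)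

lemma contDiff_deriv {g : ℝ → ℂ} (hg : ContDiff ℝ (⊤:ℕ∞) g) : ContDiff ℝ (⊤:ℕ∞) (deriv g) :=
  (contDiff_infty_iff_deriv.mp hg).2

lemma contDiff_iteratedDeriv {g : ℝ → ℂ} (hg : ContDiff ℝ (⊤:ℕ∞) g) (n : ℕ) :
    ContDiff ℝ (⊤:ℕ∞) (iteratedDeriv n g) := by
  induction n with
  | zero => simpa using hg
  | succ n ih => rw [iteratedDeriv_succ]; exact contDiff_deriv ih

lemma aop_contDiff {c : ℂ} {g : ℝ → ℂ} (hg : ContDiff ℝ (⊤:ℕ∞) g) :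
    ContDiff ℝ (⊤:ℕ∞) (Aop c g) := by
  exact ((contDiff_iteratedDeriv hg 2).neg).add (contDiff_const.mul hg)

lemma aop_iter_contDiff {c : ℂ} {g : ℝ → ℂ} (hg : ContDiff ℝ (⊤:ℕ∞) g) (j : ℕ) :
    ContDiff ℝ (⊤:ℕ∞) ((Aop c)^[j] g) := by
  induction j with
  | zero => simpa using hg
  | succ j ih => rw [Function.iterate_succ_apply']; exact aop_contDiff ih

lemma hasDerivAt_of_contDiff {g : ℝ → ℂ} (hg : ContDiff ℝ (⊤:ℕ∞) g) (x : ℝ) :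
    HasDerivAt g (deriv g x) x :=
  ((hg.differentiable (by simp)).differentiableAt).hasDerivAt

lemma iteratedDeriv_two_eq {g : ℝ → ℂ} : iteratedDeriv 2 g = deriv (deriv g) := by
  rw [iteratedDeriv_succ, iteratedDeriv_one]

/-- vector of (A^j g, (A^j g)') -/
noncomputable def Zvec (c : ℂ) (k : ℕ) (g : ℝ → ℂ) (t : ℝ) : Fin k → ℂ × ℂ :=
  fun j => ((Aop c)^[(j:ℕ)] g t, deriv ((Aop c)^[(j:ℕ)] g) t)

noncomputable def Mmat (c ε : ℂ) (k : ℕ) : (Fin (k+1) → ℂ × ℂ) →ₗ[ℂ] (Fin (k+1) → ℂ × ℂ) where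
  toFun v := fun j => ((v j).2,
    c * (v j).1 - (if h : (j:ℕ) < k then (v ⟨(j:ℕ)+1, Nat.succ_lt_succ h⟩).1 else ε * (v 0).1))
  map_add' u v := by
    funext j; by_cases h : (j:ℕ) < k <;> simp [h, Prod.ext_iff] <;> ring
  map_smul' a v := by
    funext j; by_cases h : (j:ℕ) < k <;> simp [h, Prod.ext_iff] <;> ring

lemma zvec_hasDeriv {c ε : ℂ} {k : ℕ} {g : ℝ → ℂ} (hg : ContDiff ℝ (⊤:ℕ∞) g)
    (heq : ∀ t, (Aop c)^[k+1] g t = ε * g t) (t : ℝ) :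
    HasDerivAt (Zvec c (k+1) g) (Mmat c ε k (Zvec c (k+1) g t)) t := by
  apply hasDerivAt_pi.2
  intro j
  have hj : ContDiff ℝ (⊤:ℕ∞) ((Aop c)^[(j:ℕ)] g) := aop_iter_contDiff hg _
  have h1 : HasDerivAt ((Aop c)^[(j:ℕ)] g) (deriv ((Aop c)^[(j:ℕ)] g) t) t :=
    hasDerivAt_of_contDiff hj t
  have h2 : HasDerivAt (deriv ((Aop c)^[(j:ℕ)] g))
      (deriv (deriv ((Aop c)^[(j:ℕ)] g)) t) t :=
    hasDerivAt_of_contDiff (contDiff_deriv hj) t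
  have key : deriv (deriv ((Aop c)^[(j:ℕ)] g)) t
      = c * ((Aop c)^[(j:ℕ)] g t) - (Aop c)^[(j:ℕ)+1] g t := by
    have : (Aop c)^[(j:ℕ)+1] g t = -(iteratedDeriv 2 ((Aop c)^[(j:ℕ)] g) t)
        + c * ((Aop c)^[(j:ℕ)] g t) := by
      rw [Function.iterate_succ_apply']; rfl
    rw [iteratedDeriv_two_eq] at this
    linear_combination this
  have key2 : deriv (deriv ((Aop c)^[(j:ℕ)] g)) t
      = c * (Zvec c (k+1) g t j).1 - (if h : (j:ℕ) < k
        then (Zvec c (k+1) g t ⟨(j:ℕ)+1, Nat.succ_lt_succ h⟩).1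
        else ε * (Zvec c (k+1) g t 0).1) := by
    rw [key]
    by_cases h : (j:ℕ) < k
    · simp only [dif_pos h]; rfl
    · have hjk : (j:ℕ) = k := by omega
      simp only [dif_neg h]
      have : (Aop c)^[(j:ℕ)+1] g t = ε * g t := by rw [hjk]; exact heq t
      rw [this]; rfl
  exact h1.prodMk (key2 ▸ h2)

lemma aop_unique (c ε : ℂ) (k : ℕ) (g : ℝ → ℂ) (hg : ContDiff ℝ (⊤:ℕ∞) g)
    (heq : ∀ t, (Aop c)^[k+1] g t = ε * g t) (t₀ : ℝ)
    (h0 : Zvec c (k+1) g t₀ = 0) : ∀ t, g t = 0 := by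
  intro t
  set M := LinearMap.toContinuousLinearMap (Mmat c ε k) with hM
  have hMc : ∀ v, M v = Mmat c ε k v := fun v => rfl
  have key : Zvec c (k+1) g t = 0 := by
    have ht₀ : t₀ ∈ Set.Ioo (min t t₀ - 1) (max t t₀ + 1) := by
      constructor
      · have := min_le_right t t₀; linarith
      · have := le_max_right t t₀; linarith
    have huniq := ODE_solution_unique_of_mem_Ioo
      (v := fun _ y => M y) (s := fun _ => Set.univ) (K := ‖M‖₊)
      (fun _ _ => (M.lipschitz).lipschitzOnWith)
      (f := Zvec c (k+1) g) (g := fun _ => 0) ht₀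
      (fun s _ => ⟨zvec_hasDeriv hg heq s, Set.mem_univ _⟩)
      (fun s _ => ⟨by simpa using hasDerivAt_const s (0 : Fin (k+1) → ℂ × ℂ), Set.mem_univ _⟩)
      (by simpa using h0)
    have htmem : t ∈ Set.Ioo (min t t₀ - 1) (max t t₀ + 1) := by
      constructor
      · have := min_le_left t t₀; linarith
      · have := le_max_left t t₀; linarith
    exact huniq htmem
  have := congrFun key 0
  have h1 := (Prod.ext_iff.1 this).1
  simpa [Zvec] using h1


section linearity
variable {c : ℂ} {g h : ℝ → ℂ}

lemma iteratedDeriv_add' (n : ℕ) (hg : ContDiff ℝ (⊤:ℕ∞) g) (hh : ContDiff ℝ (⊤:ℕ∞) h) (x : ℝ) :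
    iteratedDeriv n (g + h) x = iteratedDeriv n g x + iteratedDeriv n h x := by
  simp only [← iteratedDerivWithin_univ]
  exact iteratedDerivWithin_add (Set.mem_univ x) uniqueDiffOn_univ
    ((hg.of_le (by exact_mod_cast le_top)).contDiffWithinAt) ((hh.of_le (by exact_mod_cast le_top)).contDiffWithinAt)

lemma iteratedDeriv_smul' (n : ℕ) (a : ℂ) (hg : ContDiff ℝ (⊤:ℕ∞) g) (x : ℝ) :
    iteratedDeriv n (a • g) x = a • iteratedDeriv n g x := by
  simp only [← iteratedDerivWithin_univ]
  exact iteratedDerivWithin_const_smul (Set.mem_univ x) uniqueDiffOn_univ a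
    ((hg.of_le (by exact_mod_cast le_top)).contDiffWithinAt)

lemma aop_add (hg : ContDiff ℝ (⊤:ℕ∞) g) (hh : ContDiff ℝ (⊤:ℕ∞) h) :
    Aop c (g + h) = Aop c g + Aop c h := by
  funext t
  simp only [Aop, Pi.add_apply, iteratedDeriv_add' 2 hg hh]
  ring

lemma aop_smul (a : ℂ) (hg : ContDiff ℝ (⊤:ℕ∞) g) :
    Aop c (a • g) = a • Aop c g := by
  funext t
  simp only [Aop, Pi.smul_apply, iteratedDeriv_smul' 2 a hg, smul_eq_mul]
  ring

lemma iteratedDeriv_zero_fun' (n : ℕ) : iteratedDeriv n (0 : ℝ → ℂ) = 0 := by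
  induction n with
  | zero => simp
  | succ n ih =>
    rw [iteratedDeriv_succ, ih, Pi.zero_def]
    funext x
    exact deriv_const x 0

lemma aop_zero : Aop c (0 : ℝ → ℂ) = 0 := by
  funext t
  simp [Aop, iteratedDeriv_zero_fun' 2]

lemma contDiff_deriv' {g : ℝ → ℂ} (hg : ContDiff ℝ (⊤:ℕ∞) g) : ContDiff ℝ (⊤:ℕ∞) (deriv g) :=
  (contDiff_infty_iff_deriv.mp hg).2

lemma contDiff_iteratedDeriv' {g : ℝ → ℂ} (hg : ContDiff ℝ (⊤:ℕ∞) g) (n : ℕ) :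
    ContDiff ℝ (⊤:ℕ∞) (iteratedDeriv n g) := by
  induction n with
  | zero => simpa using hg
  | succ n ih => rw [iteratedDeriv_succ]; exact contDiff_deriv' ih

lemma aop_contDiff' {c : ℂ} {g : ℝ → ℂ} (hg : ContDiff ℝ (⊤:ℕ∞) g) :
    ContDiff ℝ (⊤:ℕ∞) (Aop c g) :=
  ((contDiff_iteratedDeriv' hg 2).neg).add (contDiff_const.mul hg)

lemma aop_iter_contDiff' {c : ℂ} {g : ℝ → ℂ} (hg : ContDiff ℝ (⊤:ℕ∞) g) (j : ℕ) :
    ContDiff ℝ (⊤:ℕ∞) ((Aop c)^[j] g) := by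
  induction j with
  | zero => simpa using hg
  | succ j ih => rw [Function.iterate_succ_apply']; exact aop_contDiff' ih

lemma aop_iter_add (k : ℕ) (hg : ContDiff ℝ (⊤:ℕ∞) g) (hh : ContDiff ℝ (⊤:ℕ∞) h) :
    (Aop c)^[k] (g + h) = (Aop c)^[k] g + (Aop c)^[k] h := by
  induction k with
  | zero => simp
  | succ k ih =>
    rw [Function.iterate_succ_apply', Function.iterate_succ_apply', Function.iterate_succ_apply',
      ih, aop_add (aop_iter_contDiff' hg k) (aop_iter_contDiff' hh k)]

lemma aop_iter_smul (k : ℕ) (a : ℂ) (hg : ContDiff ℝ (⊤:ℕ∞) g) :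
    (Aop c)^[k] (a • g) = a • (Aop c)^[k] g := by
  induction k with
  | zero => simp
  | succ k ih =>
    rw [Function.iterate_succ_apply', Function.iterate_succ_apply', ih,
      aop_smul a (aop_iter_contDiff' hg k)]

lemma aop_iter_zero (k : ℕ) : (Aop c)^[k] (0 : ℝ → ℂ) = 0 := by
  induction k with
  | zero => simp
  | succ k ih => rw [Function.iterate_succ_apply', ih, aop_zero]

lemma aop_shift (a : ℝ) : Aop c (fun t => g (t + a)) = fun t => Aop c g (t + a) := by
  funext t
  simp only [Aop, iteratedDeriv_comp_add_const 2 g a]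

lemma aop_iter_shift (k : ℕ) (a : ℝ) :
    (Aop c)^[k] (fun t => g (t + a)) = fun t => (Aop c)^[k] g (t + a) := by
  induction k with
  | zero => simp
  | succ k ih => rw [Function.iterate_succ_apply', Function.iterate_succ_apply', ih, aop_shift]

lemma aop_eqOn_zero {s : Set ℝ} (hs : IsOpen s) (heq : Set.EqOn g 0 s) :
    Set.EqOn (Aop c g) 0 s := by
  intro x hx
  have h2 := heq.iteratedDeriv_of_isOpen hs 2 hx
  simp only [Aop, h2, iteratedDeriv_zero_fun' 2, Pi.zero_apply, heq hx]
  ring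

lemma aop_iter_eqOn_zero {s : Set ℝ} (hs : IsOpen s) (heq : Set.EqOn g 0 s) (k : ℕ) :
    Set.EqOn ((Aop c)^[k] g) 0 s := by
  induction k with
  | zero => simpa using heq
  | succ k ih => rw [Function.iterate_succ_apply']; exact aop_eqOn_zero hs ih

end linearity

open Filter in
lemma zvec_zero_of_eqOn_zero {c : ℂ} {k : ℕ} {u : ℝ → ℂ} {s : Set ℝ} (hs : IsOpen s)
    (heq : Set.EqOn u 0 s) {t₀ : ℝ} (ht₀ : t₀ ∈ s) : Zvec c k u t₀ = 0 := by
  funext j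
  have h1 : (Aop c)^[(j:ℕ)] u t₀ = 0 := aop_iter_eqOn_zero hs heq (j:ℕ) ht₀
  have h2 : deriv ((Aop c)^[(j:ℕ)] u) t₀ = 0 := by
    have hev : (Aop c)^[(j:ℕ)] u =ᶠ[nhds t₀] (0 : ℝ → ℂ) := by
      filter_upwards [hs.mem_nhds ht₀] with x hx using aop_iter_eqOn_zero hs heq (j:ℕ) hx
    rw [hev.deriv_eq, Pi.zero_def]
    exact deriv_const t₀ 0
  simp [Zvec, h1, h2, Prod.ext_iff]

noncomputable def Usp (c ε : ℂ) (k : ℕ) : Submodule ℂ (ℝ → ℂ) where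
  carrier := {g | ContDiff ℝ (⊤:ℕ∞) g ∧ (∀ t, (Aop c)^[k] g t = ε * g t) ∧
    Integrable (fun t => ‖g t‖^2)}
  add_mem' := by
    rintro g h ⟨hg1, hg2, hg3⟩ ⟨hh1, hh2, hh3⟩
    refine ⟨hg1.add hh1, fun t => ?_, ?_⟩
    · rw [aop_iter_add _ hg1 hh1]
      simp only [Pi.add_apply, hg2 t, hh2 t]
      ring
    · have hmeas : AEStronglyMeasurable (fun t => ‖(g + h) t‖^2) volume :=
        (((hg1.continuous.add hh1.continuous).norm).pow 2).aestronglyMeasurable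
      apply Integrable.mono' ((hg3.const_mul 2).add (hh3.const_mul 2)) hmeas
      refine Filter.Eventually.of_forall (fun t => ?_)
      have h2 : ‖(g+h) t‖^2 ≤ 2*‖g t‖^2 + 2*‖h t‖^2 := by
        have h1 : ‖g t + h t‖ ≤ ‖g t‖ + ‖h t‖ := norm_add_le _ _
        have h4 : ‖g t + h t‖^2 ≤ (‖g t‖ + ‖h t‖)^2 :=
          pow_le_pow_left₀ (norm_nonneg _) h1 2
        simp only [Pi.add_apply]
        nlinarith [sq_nonneg (‖g t‖ - ‖h t‖)]
      have h3 : ‖‖(g+h) t‖^2‖ = ‖(g+h) t‖^2 := by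
        rw [Real.norm_eq_abs, abs_of_nonneg (pow_nonneg (norm_nonneg _) 2)]
      rw [h3]; exact h2
  zero_mem' := by
    refine ⟨contDiff_const, fun t => ?_, by simp⟩
    rw [aop_iter_zero]
    simp
  smul_mem' := by
    rintro a g ⟨hg1, hg2, hg3⟩
    refine ⟨hg1.const_smul a, fun t => ?_, ?_⟩
    · rw [aop_iter_smul _ a hg1]
      simp only [Pi.smul_apply, smul_eq_mul, hg2 t]
      ring
    · apply (hg3.const_mul (‖a‖^2)).congr
      refine Filter.Eventually.of_forall (fun t => ?_)
      simp only [Pi.smul_apply, smul_eq_mul, norm_mul, mul_pow]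
  
lemma mem_usp {c ε : ℂ} {k : ℕ} {g : ℝ → ℂ} :
    g ∈ Usp c ε k ↔ ContDiff ℝ (⊤:ℕ∞) g ∧ (∀ t, (Aop c)^[k] g t = ε * g t) ∧
      Integrable (fun t => ‖g t‖^2) := Iff.rfl

noncomputable def Phi (c ε : ℂ) (k : ℕ) : (Usp c ε k) →ₗ[ℂ] (Fin k → ℂ × ℂ) where
  toFun x := Zvec c k x.1 0
  map_add' x y := by
    have hx := (mem_usp.mp x.2).1
    have hy := (mem_usp.mp y.2).1
    funext j
    have hadd : (Aop c)^[(j:ℕ)] (x.1 + y.1) = (Aop c)^[(j:ℕ)] x.1 + (Aop c)^[(j:ℕ)] y.1 :=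
      aop_iter_add _ hx hy
    have hd : deriv ((Aop c)^[(j:ℕ)] x.1 + (Aop c)^[(j:ℕ)] y.1) 0
        = deriv ((Aop c)^[(j:ℕ)] x.1) 0 + deriv ((Aop c)^[(j:ℕ)] y.1) 0 := by
      have d1 : DifferentiableAt ℝ ((Aop c)^[(j:ℕ)] x.1) 0 :=
        ((aop_iter_contDiff' hx _).differentiable (by simp)).differentiableAt
      have d2 : DifferentiableAt ℝ ((Aop c)^[(j:ℕ)] y.1) 0 :=
        ((aop_iter_contDiff' hy _).differentiable (by simp)).differentiableAt
      simpa [Pi.add_def] using deriv_add d1 d2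
    have hcoe : ((x + y : Usp c ε k) : ℝ → ℂ) = x.1 + y.1 := rfl
    simp [Zvec, hcoe, hadd, hd, Prod.ext_iff, Pi.add_apply]
  map_smul' a x := by
    have hx := (mem_usp.mp x.2).1
    funext j
    have hsm : (Aop c)^[(j:ℕ)] (a • x.1) = a • (Aop c)^[(j:ℕ)] x.1 :=
      aop_iter_smul _ a hx
    have hfun : (a • (Aop c)^[(j:ℕ)] x.1) = fun t => a * (Aop c)^[(j:ℕ)] x.1 t := by
      funext t; simp
    have hd : deriv (a • (Aop c)^[(j:ℕ)] x.1) 0 = a * deriv ((Aop c)^[(j:ℕ)] x.1) 0 := by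
      rw [hfun]
      exact deriv_const_mul a
        ((aop_iter_contDiff' hx _).differentiable (by simp)).differentiableAt
    have hcoe : ((a • x : Usp c ε k) : ℝ → ℂ) = a • x.1 := rfl
    simp [Zvec, hcoe, hsm, hd, Prod.ext_iff]

noncomputable def shiftOp (c ε : ℂ) (k : ℕ) : (Usp c ε k) →ₗ[ℂ] (Usp c ε k) where
  toFun x := ⟨fun t => x.1 (t + 1), by
    obtain ⟨h1, h2, h3⟩ := mem_usp.mp x.2
    refine mem_usp.mpr ⟨h1.comp (contDiff_id.add contDiff_const), fun t => ?_, ?_⟩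
    · rw [aop_iter_shift k 1]
      exact h2 (t + 1)
    · have hmeas : AEStronglyMeasurable (fun t : ℝ => ‖x.1 t‖^2) volume :=
        ((h1.continuous.norm).pow 2).aestronglyMeasurable
      exact ((measurePreserving_add_right (volume : Measure ℝ) 1).integrable_comp
        hmeas).mpr h3⟩
  map_add' x y := Subtype.ext (funext fun t => rfl)
  map_smul' a x := Subtype.ext (funext fun t => rfl)

section core
variable {c ε : ℂ} {k : ℕ}

lemma shift_eigen_zero {u : ℝ → ℂ} (hu1 : ContDiff ℝ (⊤:ℕ∞) u)
    (hu2 : ∀ t, (Aop c)^[k+1] u t = ε * u t) (hu3 : Integrable (fun t => ‖u t‖^2))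
    {χ : ℂ} (hshift : ∀ t, u (t + 1) = χ * u t) : ∀ t, u t = 0 := by
  by_cases hχ : χ = 0
  · have heqOn : Set.EqOn u 0 (Set.Ioi 1) := by
      intro t ht
      have : u ((t - 1) + 1) = χ * u (t - 1) := hshift (t - 1)
      rw [sub_add_cancel, hχ, zero_mul] at this
      simpa using this
    exact aop_unique c ε k u hu1 hu2 2
      (zvec_zero_of_eqOn_zero isOpen_Ioi heqOn (by norm_num : (2:ℝ) ∈ Set.Ioi 1))
  · set w : ℝ → ℝ := fun t => ‖u t‖^2 with hw_def
    have hw_nonneg : ∀ t, 0 ≤ w t := fun t => pow_nonneg (norm_nonneg _) 2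
    have hw_int : Integrable w := hu3
    have hws : ∀ t, w (t + 1) = ‖χ‖^2 * w t := by
      intro t
      simp only [hw_def, hshift t, norm_mul, mul_pow]
    set r : ℝ := ‖χ‖^2 with hr_def
    have hr : 0 < r := pow_pos (norm_pos_iff.mpr hχ) 2
    have hInt : ∀ a b : ℝ, IntervalIntegrable w volume a b := fun a b =>
      hw_int.intervalIntegrable
    have hshiftI : ∀ a b : ℝ, (∫ t in (a+1)..(b+1), w t) = r * ∫ t in a..b, w t := by
      intro a b
      rw [← intervalIntegral.integral_comp_add_right w 1]
      simp_rw [hws]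
      exact intervalIntegral.integral_const_mul r w
    set C : ℝ := ∫ t in (0:ℝ)..1, w t with hC_def
    have hC0 : 0 ≤ C :=
      intervalIntegral.integral_nonneg zero_le_one (fun x _ => hw_nonneg x)
    set I : ℝ := ∫ t, w t with hI_def
    have hIb : ∀ a b : ℝ, a ≤ b → (∫ t in a..b, w t) ≤ I := by
      intro a b hab
      rw [intervalIntegral.integral_of_le hab]
      exact setIntegral_le_integral hw_int (Filter.Eventually.of_forall hw_nonneg)
    have hDnn : ∀ a b : ℝ, a ≤ b → 0 ≤ ∫ t in a..b, w t := fun a b hab =>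
      intervalIntegral.integral_nonneg hab (fun x _ => hw_nonneg x)
    have hCzero : C = 0 := by
      rcases le_or_gt 1 r with hr1 | hr1
      · -- r ≥ 1 : push to the right
        have up : ∀ m : ℕ, C ≤ ∫ t in (m:ℝ)..((m:ℝ)+1), w t := by
          intro m
          induction m with
          | zero => simp [hC_def]
          | succ m ih =>
            have hs := hshiftI (m:ℝ) ((m:ℝ)+1)
            have : C ≤ r * ∫ t in (m:ℝ)..((m:ℝ)+1), w t :=
              le_trans ih (le_mul_of_one_le_left (hDnn _ _ (by linarith)) hr1)
            push_cast
            rw [hs]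
            exact this
        have sumup : ∀ n : ℕ, (n:ℝ) * C ≤ ∫ t in (0:ℝ)..(n:ℝ), w t := by
          intro n
          have hadj := intervalIntegral.sum_integral_adjacent_intervals
            (a := fun i : ℕ => (i:ℝ)) (n := n) (μ := volume) (f := w) (fun i _ => hInt _ _)
          simp only [Nat.cast_zero] at hadj
          rw [← hadj]
          have : ∀ i ∈ Finset.range n, C ≤ ∫ t in ((i:ℕ):ℝ)..(((i+1:ℕ)):ℝ), w t := by
            intro i _
            have := up i
            push_cast
            exact this
          calc (n:ℝ) * C = ∑ _i ∈ Finset.range n, C := by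
                rw [Finset.sum_const, Finset.card_range, nsmul_eq_mul]
            _ ≤ _ := Finset.sum_le_sum this
        by_contra hCne
        have hCpos : 0 < C := lt_of_le_of_ne hC0 (Ne.symm hCne)
        obtain ⟨n, hn⟩ := exists_nat_gt (I / C)
        have h1 : (n:ℝ) * C ≤ I := le_trans (sumup n) (hIb 0 n (by positivity))
        have h2 : I < (n:ℝ) * C := by
          rw [div_lt_iff₀ hCpos] at hn
          linarith
        linarith
      · -- r < 1 : push to the left
        have down : ∀ m : ℕ, C ≤ ∫ t in (-(m:ℝ)-1)..(-(m:ℝ)), w t := by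
          intro m
          induction m with
          | zero =>
            have hs := hshiftI (-1 : ℝ) 0
            norm_num at hs ⊢
            -- hs : ∫ 0..1 = r * ∫ -1..0
            have hD0 : 0 ≤ ∫ t in (-1:ℝ)..0, w t := hDnn _ _ (by norm_num)
            have : C = r * ∫ t in (-1:ℝ)..0, w t := by rw [hC_def]; convert hs using 2 <;> norm_num
            calc C = r * ∫ t in (-1:ℝ)..0, w t := this
              _ ≤ ∫ t in (-1:ℝ)..0, w t := mul_le_of_le_one_left hD0 hr1.le
          | succ m ih =>
            have hs := hshiftI (-(m:ℝ)-2) (-(m:ℝ)-1)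
            -- hs : ∫ (-m-1)..(-m) = r * ∫ (-m-2)..(-m-1)
            have heq1 : (-(m:ℝ)-2+1) = -(m:ℝ)-1 := by ring
            have heq2 : (-(m:ℝ)-1+1) = -(m:ℝ) := by ring
            rw [heq1, heq2] at hs
            have hDnn' : 0 ≤ ∫ t in (-(m:ℝ)-2)..(-(m:ℝ)-1), w t := hDnn _ _ (by linarith)
            have hle : (∫ t in (-(m:ℝ)-1)..(-(m:ℝ)), w t) ≤ ∫ t in (-(m:ℝ)-2)..(-(m:ℝ)-1), w t := by
              rw [hs]
              exact mul_le_of_le_one_left hDnn' hr1.le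
            have : C ≤ ∫ t in (-(m:ℝ)-2)..(-(m:ℝ)-1), w t := le_trans ih hle
            push_cast
            have e1 : (-((m:ℝ)+1)-1) = -(m:ℝ)-2 := by ring
            have e2 : (-((m:ℝ)+1)) = -(m:ℝ)-1 := by ring
            rw [e1, e2]
            exact this
        have term : ∀ i n : ℕ, i < n → C ≤ ∫ t in ((i:ℝ)-(n:ℝ))..((i:ℝ)-(n:ℝ)+1), w t := by
          intro i n hin
          have h1 : i ≤ n - 1 := by omega
          have h2 : 1 ≤ n := by omega
          have hc : ((n-1-i : ℕ) : ℝ) = (n:ℝ) - 1 - (i:ℝ) := by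
            push_cast [Nat.cast_sub h1, Nat.cast_sub h2]
            ring
          have := down (n-1-i)
          rw [hc] at this
          have e1 : (-((n:ℝ)-1-(i:ℝ))-1) = (i:ℝ)-(n:ℝ) := by ring
          have e2 : (-((n:ℝ)-1-(i:ℝ))) = (i:ℝ)-(n:ℝ)+1 := by ring
          rw [e1, e2] at this
          exact this
        have sumdown : ∀ n : ℕ, (n:ℝ) * C ≤ ∫ t in (-(n:ℝ))..0, w t := by
          intro n
          have hadj := intervalIntegral.sum_integral_adjacent_intervals
            (a := fun i : ℕ => (i:ℝ) - (n:ℝ)) (n := n) (μ := volume) (f := w) (fun i _ => hInt _ _)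
          simp only [Nat.cast_zero, zero_sub, sub_self] at hadj
          rw [← hadj]
          have hterm : ∀ i ∈ Finset.range n, C ≤ ∫ t in ((i:ℕ):ℝ)-(n:ℝ)..(((i+1:ℕ)):ℝ)-(n:ℝ), w t := by
            intro i hi
            have hin := Finset.mem_range.mp hi
            have := term i n hin
            have e : (((i+1:ℕ)):ℝ)-(n:ℝ) = (i:ℝ)-(n:ℝ)+1 := by push_cast; ring
            rw [e]
            exact this
          calc (n:ℝ) * C = ∑ _i ∈ Finset.range n, C := by
                rw [Finset.sum_const, Finset.card_range, nsmul_eq_mul]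
            _ ≤ _ := Finset.sum_le_sum hterm
        by_contra hCne
        have hCpos : 0 < C := lt_of_le_of_ne hC0 (Ne.symm hCne)
        obtain ⟨n, hn⟩ := exists_nat_gt (I / C)
        have h1 : (n:ℝ) * C ≤ I := le_trans (sumdown n) (hIb _ 0 (by simp [neg_nonpos]))
        have h2 : I < (n:ℝ) * C := by
          rw [div_lt_iff₀ hCpos] at hn
          linarith
        linarith
    -- C = 0 ⇒ u vanishes on (0,1)
    have hIoc : (∫ t in Set.Ioc (0:ℝ) 1, w t) = 0 := by
      rw [← intervalIntegral.integral_of_le zero_le_one]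
      exact hCzero
    have hae : w =ᵐ[volume.restrict (Set.Ioc (0:ℝ) 1)] 0 := by
      rw [← setIntegral_eq_zero_iff_of_nonneg_ae
        (Filter.Eventually.of_forall (fun t => hw_nonneg t) : 0 ≤ᵐ[volume.restrict (Set.Ioc (0:ℝ) 1)] w)
        hw_int.integrableOn]
      exact hIoc
    have hnull : volume ({t | w t ≠ 0} ∩ Set.Ioc 0 1) = 0 := by
      rw [Filter.EventuallyEq, ae_iff] at hae
      simpa [Measure.restrict_apply' measurableSet_Ioc] using hae
    have heqOn : Set.EqOn u 0 (Set.Ioo 0 1) := by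
      have hO_open : IsOpen ({t | u t ≠ 0} ∩ Set.Ioo (0:ℝ) 1) :=
        (isOpen_compl_singleton.preimage hu1.continuous).inter isOpen_Ioo
      have hsub : ({t | u t ≠ 0} ∩ Set.Ioo (0:ℝ) 1) ⊆ ({t | w t ≠ 0} ∩ Set.Ioc 0 1) := by
        rintro t ⟨ht1, ht2⟩
        exact ⟨pow_ne_zero 2 (norm_ne_zero_iff.mpr ht1), Set.Ioo_subset_Ioc_self ht2⟩
      have hempty : ({t | u t ≠ 0} ∩ Set.Ioo (0:ℝ) 1) = ∅ :=
        hO_open.eq_empty_of_measure_zero (measure_mono_null hsub hnull)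
      intro t ht
      by_contra hne
      have : t ∈ ({t | u t ≠ 0} ∩ Set.Ioo (0:ℝ) 1) := ⟨hne, ht⟩
      rw [hempty] at this
      exact this
    exact aop_unique c ε k u hu1 hu2 (1/2)
      (zvec_zero_of_eqOn_zero isOpen_Ioo heqOn (by norm_num : (1/2:ℝ) ∈ Set.Ioo 0 1))
end core

lemma usp_engine (c ε : ℂ) (k : ℕ) {g : ℝ → ℂ} (hmem : g ∈ Usp c ε (k+1)) :
    ∀ t, g t = 0 := by
  by_contra hcon
  push_neg at hcon
  obtain ⟨t₁, ht₁⟩ := hcon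
  haveI : Nontrivial (Usp c ε (k+1)) := by
    refine ⟨⟨g, hmem⟩, 0, fun hh => ht₁ ?_⟩
    have := congrFun (congrArg Subtype.val hh) t₁
    simpa using this
  have hinj : Function.Injective (Phi c ε (k+1)) := by
    rw [← LinearMap.ker_eq_bot, Submodule.eq_bot_iff]
    rintro ⟨u, hu⟩ hker
    obtain ⟨hu1, hu2, hu3⟩ := mem_usp.mp hu
    have h0 : Zvec c (k+1) u 0 = 0 := hker
    exact Subtype.ext (funext (aop_unique c ε k u hu1 hu2 0 h0))
  haveI : FiniteDimensional ℂ (Usp c ε (k+1)) := FiniteDimensional.of_injective _ hinj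
  obtain ⟨χ, hχ⟩ := Module.End.exists_eigenvalue (shiftOp c ε (k+1))
  obtain ⟨v, hv⟩ := hχ.exists_hasEigenvector
  set u : ℝ → ℂ := (v : ℝ → ℂ) with hu_def
  obtain ⟨hu1, hu2, hu3⟩ := mem_usp.mp v.2
  have hshift : ∀ t, u (t + 1) = χ * u t := by
    intro t
    have := congrFun (congrArg Subtype.val hv.apply_eq_smul) t
    simpa [shiftOp, hu_def] using this
  -- derive u ≡ 0
  have hzero : ∀ t, u t = 0 := shift_eigen_zero hu1 hu2 hu3 hshift
  exact hv.2 (Subtype.ext (by funext t; simpa using hzero t))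

lemma iteratedDeriv_two_eq' {g : ℝ → ℂ} : iteratedDeriv 2 g = deriv (deriv g) := by
  rw [iteratedDeriv_succ, iteratedDeriv_one]

noncomputable def Tmap (f : ℝ → ℂ) : ℝ → ℂ :=
  fun t => Complex.exp ((t:ℂ)/2) * f (Real.exp t)

noncomputable def Gop (f : ℝ → ℂ) : ℝ → ℂ :=
  fun x => (1/2 : ℂ) * f x + (x:ℂ) * deriv f x

lemma contDiff_coe : ContDiff ℝ (⊤:ℕ∞) (fun x:ℝ => (x:ℂ)) :=
  Complex.ofRealCLM.contDiff

lemma inf_add_one_le : ((⊤:ℕ∞) : WithTop ℕ∞) + 1 ≤ ((⊤:ℕ∞) : WithTop ℕ∞) := by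
  have : ((⊤:ℕ∞) : WithTop ℕ∞) + 1 = ((⊤:ℕ∞) : WithTop ℕ∞) := by
    exact_mod_cast (by simp : (⊤:ℕ∞) + 1 = ⊤)
  rw [this]

lemma deriv_contDiffOn {f : ℝ → ℂ} (hf : ContDiffOn ℝ (⊤:ℕ∞) f (Set.Ioi 0)) :
    ContDiffOn ℝ (⊤:ℕ∞) (deriv f) (Set.Ioi 0) :=
  hf.deriv_of_isOpen isOpen_Ioi inf_add_one_le

lemma gop_contDiffOn {f : ℝ → ℂ} (hf : ContDiffOn ℝ (⊤:ℕ∞) f (Set.Ioi 0)) :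
    ContDiffOn ℝ (⊤:ℕ∞) (Gop f) (Set.Ioi 0) := by
  apply ContDiffOn.add
  · exact (contDiff_const.contDiffOn).mul hf
  · exact (contDiff_coe.contDiffOn).mul (deriv_contDiffOn hf)

lemma lop_contDiffOn {lam : ℝ} {f : ℝ → ℂ} (hf : ContDiffOn ℝ (⊤:ℕ∞) f (Set.Ioi 0)) :
    ContDiffOn ℝ (⊤:ℕ∞) (Lop lam f) (Set.Ioi 0) := by
  have h2 : ContDiffOn ℝ (⊤:ℕ∞) (iteratedDeriv 2 f) (Set.Ioi 0) := by
    rw [iteratedDeriv_two_eq']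
    exact deriv_contDiffOn (deriv_contDiffOn hf)
  apply ContDiffOn.add
  apply ContDiffOn.sub
  · exact ((contDiff_coe.pow 2).neg.contDiffOn).mul h2
  · exact ((contDiff_const.mul contDiff_coe).contDiffOn).mul (deriv_contDiffOn hf)
  · exact (contDiff_const.contDiffOn).mul hf

lemma hasDerivAt_coe (x : ℝ) : HasDerivAt (fun y:ℝ => (y:ℂ)) 1 x :=
  HasDerivAt.ofReal_comp (hasDerivAt_id x)

lemma hasDerivAt_expHalf (t : ℝ) :
    HasDerivAt (fun s:ℝ => Complex.exp ((s:ℂ)/2)) ((1/2) * Complex.exp ((t:ℂ)/2)) t := by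
  have h1 : HasDerivAt (fun z:ℂ => Complex.exp (z/2)) (Complex.exp ((t:ℂ)/2) * (1/2)) ((t:ℂ)) := by
    have := (Complex.hasDerivAt_exp ((t:ℂ)/2)).comp (t:ℂ) ((hasDerivAt_id ((t:ℂ))).div_const 2)
    exact this
  have := h1.comp_ofReal
  convert this using 1
  ring

lemma hasDerivAt_comp_exp {u : ℝ → ℂ} (hu : ContDiffOn ℝ (⊤:ℕ∞) u (Set.Ioi 0)) (t : ℝ) :
    HasDerivAt (fun s => u (Real.exp s)) (Real.exp t • deriv u (Real.exp t)) t := by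
  have hx : ContDiffAt ℝ (⊤:ℕ∞) u (Real.exp t) :=
    hu.contDiffAt (Ioi_mem_nhds (Real.exp_pos t))
  have hd : HasDerivAt u (deriv u (Real.exp t)) (Real.exp t) :=
    ((hx.differentiableAt (by simp))).hasDerivAt
  exact hd.scomp t (Real.hasDerivAt_exp t)

lemma hasDerivAt_tmap {f : ℝ → ℂ} (hf : ContDiffOn ℝ (⊤:ℕ∞) f (Set.Ioi 0)) (t : ℝ) :
    HasDerivAt (Tmap f) (Tmap (Gop f) t) t := by
  have h1 := hasDerivAt_expHalf t
  have h2 := hasDerivAt_comp_exp hf t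
  have := h1.mul h2
  convert this using 1
  · rfl
  · rfl
  simp only [Tmap, Gop, Complex.real_smul]
  push_cast
  ring

lemma deriv_tmap {f : ℝ → ℂ} (hf : ContDiffOn ℝ (⊤:ℕ∞) f (Set.Ioi 0)) :
    deriv (Tmap f) = Tmap (Gop f) :=
  funext fun t => (hasDerivAt_tmap hf t).deriv

lemma iteratedDeriv2_tmap {f : ℝ → ℂ} (hf : ContDiffOn ℝ (⊤:ℕ∞) f (Set.Ioi 0)) :
    iteratedDeriv 2 (Tmap f) = Tmap (Gop (Gop f)) := by
  rw [iteratedDeriv_two_eq', deriv_tmap hf, deriv_tmap (gop_contDiffOn hf)]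

lemma gop_deriv_at {f : ℝ → ℂ} (hf : ContDiffOn ℝ (⊤:ℕ∞) f (Set.Ioi 0)) {x : ℝ} (hx : 0 < x) :
    deriv (Gop f) x = (3/2 : ℂ) * deriv f x + (x:ℂ) * deriv (deriv f) x := by
  have hd1 : HasDerivAt f (deriv f x) x :=
    ((hf.contDiffAt (Ioi_mem_nhds hx)).differentiableAt (by simp)).hasDerivAt
  have hd2 : HasDerivAt (deriv f) (deriv (deriv f) x) x :=
    (((deriv_contDiffOn hf).contDiffAt (Ioi_mem_nhds hx)).differentiableAt (by simp)).hasDerivAt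
  have h : HasDerivAt (Gop f) ((1/2:ℂ) * deriv f x
      + ((1:ℂ) * deriv f x + (x:ℂ) * deriv (deriv f) x)) x := by
    exact ((hd1.const_mul (1/2:ℂ))).add (((hasDerivAt_coe x).mul hd2))
  rw [h.deriv]
  ring

lemma gop_gop_eval {f : ℝ → ℂ} (hf : ContDiffOn ℝ (⊤:ℕ∞) f (Set.Ioi 0)) {x : ℝ} (hx : 0 < x) :
    Gop (Gop f) x = (1/4:ℂ) * f x + 2 * (x:ℂ) * deriv f x + (x:ℂ)^2 * deriv (deriv f) x := by
  have := gop_deriv_at hf hx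
  simp only [Gop, this]
  ring

lemma tmap_conj {lam : ℝ} {f : ℝ → ℂ} (hf : ContDiffOn ℝ (⊤:ℕ∞) f (Set.Ioi 0)) :
    Aop ((lam:ℂ) + 1/4) (Tmap f) = Tmap (Lop lam f) := by
  funext t
  have hx : (0:ℝ) < Real.exp t := Real.exp_pos t
  simp only [Aop, iteratedDeriv2_tmap hf]
  simp only [Tmap, Lop, gop_gop_eval hf hx,
    congrFun (iteratedDeriv_two_eq' (g := f)) (Real.exp t)]
  ring

lemma lop_iter_contDiffOn {lam : ℝ} {f : ℝ → ℂ} (hf : ContDiffOn ℝ (⊤:ℕ∞) f (Set.Ioi 0)) (j : ℕ) :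
    ContDiffOn ℝ (⊤:ℕ∞) ((Lop lam)^[j] f) (Set.Ioi 0) := by
  induction j with
  | zero => simpa using hf
  | succ j ih => rw [Function.iterate_succ_apply']; exact lop_contDiffOn ih

lemma tmap_conj_iter {lam : ℝ} {f : ℝ → ℂ} (hf : ContDiffOn ℝ (⊤:ℕ∞) f (Set.Ioi 0)) (j : ℕ) :
    (Aop ((lam:ℂ) + 1/4))^[j] (Tmap f) = Tmap ((Lop lam)^[j] f) := by
  induction j with
  | zero => simp
  | succ j ih =>
    rw [Function.iterate_succ_apply', Function.iterate_succ_apply', ih,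
      tmap_conj (lop_iter_contDiffOn hf j)]

lemma tmap_contDiff {f : ℝ → ℂ} (hf : ContDiffOn ℝ (⊤:ℕ∞) f (Set.Ioi 0)) :
    ContDiff ℝ (⊤:ℕ∞) (Tmap f) := by
  have h1 : ContDiff ℝ (⊤:ℕ∞) (fun t:ℝ => Complex.exp ((t:ℂ)/2)) := by
    have : ContDiff ℝ (⊤:ℕ∞) (fun z:ℂ => Complex.exp z) :=
      ContDiff.restrict_scalars ℝ (Complex.contDiff_exp.of_le le_top : ContDiff ℂ (⊤:ℕ∞) Complex.exp)
    exact this.comp (contDiff_coe.div_const 2)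
  have h2 : ContDiff ℝ (⊤:ℕ∞) (fun t => f (Real.exp t)) := by
    rw [← contDiffOn_univ]
    exact ContDiffOn.comp hf ((Real.contDiff_exp.of_le le_top).contDiffOn)
      (fun x _ => Real.exp_pos x)
  exact h1.mul h2

lemma tmap_integrable {f : ℝ → ℂ} (hL2 : IntegrableOn (fun x => ‖f x‖ ^ 2) (Set.Ioi 0)) :
    Integrable (fun t => ‖Tmap f t‖^2) := by
  have himg : IntegrableOn (fun x => ‖f x‖ ^ 2) (Real.exp '' Set.univ) := by
    rwa [Set.image_univ, Real.range_exp]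
  have h0 : IntegrableOn (fun t => |Real.exp t| • ‖f (Real.exp t)‖^2) Set.univ :=
    (MeasureTheory.integrableOn_image_iff_integrableOn_abs_deriv_smul MeasurableSet.univ
      (fun x _ => (Real.hasDerivAt_exp x).hasDerivWithinAt) (Real.exp_injective.injOn) (fun x => ‖f x‖^2)).mp himg
  rw [← integrableOn_univ]
  apply h0.congr_fun ?_ MeasurableSet.univ
  intro t _
  show |Real.exp t| • ‖f (Real.exp t)‖^2 = ‖Tmap f t‖^2
  have h1 : ‖Tmap f t‖^2 = (Real.exp (t/2))^2 * ‖f (Real.exp t)‖^2 := by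
    simp only [Tmap, norm_mul, mul_pow]
    congr 2
    rw [Complex.norm_exp]
    congr 1
    push_cast
    simp
  rw [h1, abs_of_pos (Real.exp_pos t), smul_eq_mul]
  congr 1
  rw [sq, ← Real.exp_add]
  norm_num

/-- Deficiency indices vanish: if `f` is smooth on `(0,∞)`, square integrable, and satisfies
`L^k f = ε f` with `ε = ±i`, then `f ≡ 0` on `(0,∞)`. -/
theorem stmt14 (lam : ℝ) (hlam : 0 ≤ lam) (k : ℕ) (hk : 1 ≤ k) (ε : ℂ)
    (hε : ε = Complex.I ∨ ε = -Complex.I)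
    (f : ℝ → ℂ) (hf : ContDiffOn ℝ (⊤ : ℕ∞) f (Set.Ioi 0))
    (heigen : ∀ x : ℝ, 0 < x → (Lop lam)^[k] f x = ε * f x)
    (hL2 : IntegrableOn (fun x => ‖f x‖ ^ 2) (Set.Ioi 0)) :
    ∀ x : ℝ, 0 < x → f x = 0 := by
  intro x hx
  have hf' : ContDiffOn ℝ (⊤:ℕ∞) f (Set.Ioi 0) := hf.of_le (by simp)
  set c : ℂ := (lam:ℂ) + 1/4 with hc
  obtain ⟨k', rfl⟩ : ∃ k', k = k'+1 := ⟨k-1, by omega⟩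
  have hg1 : ContDiff ℝ (⊤:ℕ∞) (Tmap f) := tmap_contDiff hf'
  have hg2 : ∀ t, (Aop c)^[k'+1] (Tmap f) t = ε * Tmap f t := by
    intro t
    rw [hc, tmap_conj_iter hf' (k'+1)]
    simp only [Tmap]
    rw [heigen (Real.exp t) (Real.exp_pos t)]
    ring
  have hg3 : Integrable (fun t => ‖Tmap f t‖^2) := tmap_integrable hL2
  have hmem : Tmap f ∈ Usp c ε (k'+1) := mem_usp.mpr ⟨hg1, hg2, hg3⟩
  have hzero := usp_engine c ε k' hmem
  have hlog := hzero (Real.log x)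
  simp only [Tmap, Real.exp_log hx] at hlog
  rcases mul_eq_zero.mp hlog with h | h
  · exact absurd h (Complex.exp_ne_zero _)
  · exact h
end
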